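/- arXiv:2602.20578 — 6 statements merged into one kernel-verified Lean document; each statement's English description precedes it below -/
import Mathlib

section
/- Let f : [0,1]^d → ℝ be a non-negative, differentiable, continuous DR-submodular function. Then for every x, y ∈ [0,1]^d and every z ∈ [0,1], writing x̄ = max_j x_j for the largest coordinate of x, one has f(h_z(x) ⊕ y) ≥ e^{−z x̄} · f(y) ≥ e^{−z} · f(y). -/
open scoped RealInnerProductSpace

noncomputable section

/-- Membership in the unit box `[0,1]^d`. -/
def inBox {d : ℕ} (x : EuclideanSpace ℝ (Fin d)) : Prop :=
  ∀ i, x i ∈ Set.Icc (0 : ℝ) 1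

/-- Continuous DR-submodularity: the gradient is coordinate-wise antitone on `[0,1]^d`. -/
def DRSubmodular {d : ℕ} (f : EuclideanSpace ℝ (Fin d) → ℝ) : Prop :=
  ∀ x y : EuclideanSpace ℝ (Fin d), inBox x → inBox y → (∀ i, x i ≤ y i) →
    ∀ i, gradient f y i ≤ gradient f x i

/-- The exponential reparametrization `h_z(x) = 1 - e^{-z x}` (coordinate-wise). -/
def hmap {d : ℕ} (z : ℝ) (x : EuclideanSpace ℝ (Fin d)) : EuclideanSpace ℝ (Fin d) :=
  WithLp.toLp 2 (fun i => 1 - Real.exp (-(z * x i)))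

/-- Coordinate-wise probabilistic sum `x ⊕ y = 1 - (1-x) ⊙ (1-y)`. -/
def psum {d : ℕ} (x y : EuclideanSpace ℝ (Fin d)) : EuclideanSpace ℝ (Fin d) :=
  WithLp.toLp 2 (fun i => 1 - (1 - x i) * (1 - y i))

/-- Coordinate-wise (Hadamard) product. -/
def had {d : ℕ} (u v : EuclideanSpace ℝ (Fin d)) : EuclideanSpace ℝ (Fin d) :=
  WithLp.toLp 2 (fun i => u i * v i)

/-- Coordinate-wise exponential `e^{-z x}`. -/
def expv {d : ℕ} (z : ℝ) (x : EuclideanSpace ℝ (Fin d)) : EuclideanSpace ℝ (Fin d) :=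
  WithLp.toLp 2 (fun i => Real.exp (-(z * x i)))

/-- The surrogate potential
`F(x) = ∫₀¹ (e^{z-1} / ((1-e⁻¹) z)) (f(1 - e^{-z x}) - f(0)) dz`. -/
def surrogate {d : ℕ} (f : EuclideanSpace ℝ (Fin d) → ℝ)
    (x : EuclideanSpace ℝ (Fin d)) : ℝ :=
  ∫ z in (0:ℝ)..1, (Real.exp (z - 1) / ((1 - Real.exp (-1)) * z)) * (f (hmap z x) - f 0)

/-- A set `K ⊆ [0,1]^d` is down-closed if `y ∈ K` and `0 ≤ x ≤ y` imply `x ∈ K`. -/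
def DownClosed {d : ℕ} (K : Set (EuclideanSpace ℝ (Fin d))) : Prop :=
  ∀ y ∈ K, ∀ x : EuclideanSpace ℝ (Fin d), (∀ i, 0 ≤ x i) → (∀ i, x i ≤ y i) → x ∈ K

/-! Run along the path `γ s = h_s(x) ⊕ y` from `γ 0 = y` to `γ z = h_z(x) ⊕ y`; its velocity is
`x ⊙ (1 - γ) ≤ x̄ (1 - γ)`. DR-submodularity makes `f` concave along nonnegative directions, so
for `0 ≤ v` with `γ + v` in the box, `f γ + ⟪∇f γ, v⟫ ≥ f (γ + v) ≥ 0`. Rescaling gives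
`(f ∘ γ)' ≥ -x̄ (f ∘ γ)`, i.e. `s ↦ e^{x̄ s} f (γ s)` is nondecreasing. -/

variable {d : ℕ}

lemma HasGradientAt.hasDerivAt_comp {F : Type*} [NormedAddCommGroup F] [InnerProductSpace ℝ F]
    [CompleteSpace F] {f : F → ℝ} {γ : ℝ → F} {g v : F} {t : ℝ}
    (hf : HasGradientAt f g (γ t)) (hγ : HasDerivAt γ v t) :
    HasDerivAt (fun s => f (γ s)) ⟪g, v⟫ t := by
  have h := hf.hasFDerivAt.comp_hasDerivAt t hγ
  rwa [InnerProductSpace.toDual_apply_apply] at h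

lemma PiLp.hasDerivAt_toLp {ι : Type*} [Fintype ι] (p : ENNReal) [Fact (1 ≤ p)]
    {φ : ℝ → ι → ℝ} {φ' : ι → ℝ} {t : ℝ} (h : ∀ i, HasDerivAt (fun s => φ s i) (φ' i) t) :
    HasDerivAt (fun s => WithLp.toLp p (φ s)) (WithLp.toLp p φ') t :=
  (PiLp.hasFDerivAt_toLp p (φ t)).comp_hasDerivAt t (hasDerivAt_pi.2 h)

namespace DRSubmodular

variable {f : EuclideanSpace ℝ (Fin d) → ℝ}

theorem le_add_inner_gradient (hdiff : Differentiable ℝ f) (hDR : DRSubmodular f)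
    {c w : EuclideanSpace ℝ (Fin d)} (hc : inBox c) (hw : inBox w) (hcw : ∀ i, c i ≤ w i) :
    f w ≤ f c + ⟪gradient f c, w - c⟫ := by
  obtain ⟨p, hp, hmvt⟩ := domain_mvt (f' := fun p => fderiv ℝ f p)
    (fun p _ => (hdiff p).hasFDerivAt.hasFDerivWithinAt) convex_univ (Set.mem_univ c)
    (Set.mem_univ w)
  obtain ⟨a, b, ha, hb, hab, rfl⟩ := hp
  obtain rfl : a = 1 - b := by linarith
  have hcoord : ∀ i, ((1 - b) • c + b • w) i = c i + b * (w i - c i) := fun i => by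
    simp only [PiLp.add_apply, PiLp.smul_apply, smul_eq_mul]; ring
  have hcp : ∀ i, c i ≤ ((1 - b) • c + b • w) i := fun i => by
    rw [hcoord]; nlinarith [hcw i]
  have hp : inBox ((1 - b) • c + b • w) := fun i => by
    rw [hcoord]
    constructor <;> nlinarith [hcw i, (hc i).1, (hw i).2]
  have hgrad : ⟪gradient f ((1 - b) • c + b • w), w - c⟫ ≤ ⟪gradient f c, w - c⟫ := by
    simp only [PiLp.inner_apply, RCLike.inner_apply, conj_trivial, PiLp.sub_apply]
    exact Finset.sum_le_sum fun i _ =>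
      mul_le_mul_of_nonneg_left (hDR c _ hc hp hcp i) (sub_nonneg.2 (hcw i))
  rw [← inner_gradient_left] at hmvt
  linarith

theorem neg_mul_le_inner_gradient (hdiff : Differentiable ℝ f)
    (hpos : ∀ x, inBox x → 0 ≤ f x) (hDR : DRSubmodular f)
    {c v : EuclideanSpace ℝ (Fin d)} (hc : inBox c) {l : ℝ} (hl : 0 ≤ l)
    (hv0 : ∀ i, 0 ≤ v i) (hvl : ∀ i, v i ≤ l * (1 - c i)) :
    -(l * f c) ≤ ⟪gradient f c, v⟫ := by
  rcases hl.eq_or_lt with rfl | hl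
  · have : v = 0 := by ext i; exact le_antisymm (by simpa using hvl i) (hv0 i)
    simp [this]
  set w := c + l⁻¹ • v
  have hcoord : ∀ i, w i = c i + v i / l := fun i => by simp [w, div_eq_inv_mul]
  have hcw : ∀ i, c i ≤ w i := fun i => by
    rw [hcoord]; exact le_add_of_nonneg_right (div_nonneg (hv0 i) hl.le)
  have hw : inBox w := fun i => by
    refine ⟨(hc i).1.trans (hcw i), ?_⟩
    rw [hcoord, ← le_sub_iff_add_le', div_le_iff₀' hl]
    exact hvl i
  have hconcave := le_add_inner_gradient hdiff hDR hc hw hcw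
  rw [show w - c = l⁻¹ • v by simp [w], inner_smul_right] at hconcave
  have hscaled : -f c ≤ l⁻¹ * ⟪gradient f c, v⟫ := by linarith [hpos w hw]
  rw [le_inv_mul_iff₀ hl] at hscaled
  linarith

end DRSubmodular

lemma inBox_psum {a b : EuclideanSpace ℝ (Fin d)} (ha : inBox a) (hb : inBox b) :
    inBox (psum a b) := fun i => by
  have := ha i; have := hb i
  simp only [psum, Set.mem_Icc] at *
  constructor <;> nlinarith

lemma inBox_hmap {s : ℝ} (hs : 0 ≤ s) {x : EuclideanSpace ℝ (Fin d)} (hx : ∀ i, 0 ≤ x i) :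
    inBox (hmap s x) := fun i => by
  simp only [hmap, Set.mem_Icc, sub_nonneg, Real.exp_le_one_iff, neg_nonpos]
  exact ⟨mul_nonneg hs (hx i), by linarith [Real.exp_pos (-(s * x i))]⟩

lemma hasDerivAt_psum_hmap (x y : EuclideanSpace ℝ (Fin d)) (s : ℝ) :
    HasDerivAt (fun t => psum (hmap t x) y)
      (WithLp.toLp 2 fun i => x i * (1 - psum (hmap s x) y i)) s := by
  refine PiLp.hasDerivAt_toLp 2 fun i => ?_
  have h : HasDerivAt (fun t => 1 - Real.exp (-(t * x i)) * (1 - y i))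
      (x i * Real.exp (-(s * x i)) * (1 - y i)) s :=
    ((((hasDerivAt_id s).mul_const (x i)).fun_neg.exp).mul_const (1 - y i)).const_sub 1
      |>.congr_deriv (by simp only [id, one_mul]; ring)
  refine h.congr_deriv ?_ |>.congr_of_eventuallyEq (Filter.Eventually.of_forall fun t => ?_)
  · simp only [psum, hmap]; ring
  · simp only [hmap]; ring

theorem DRSubmodular.monotoneOn_exp_mul_apply_psum_hmap {f : EuclideanSpace ℝ (Fin d) → ℝ}
    (hdiff : Differentiable ℝ f) (hpos : ∀ x, inBox x → 0 ≤ f x) (hDR : DRSubmodular f)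
    {x y : EuclideanSpace ℝ (Fin d)} (hx : inBox x) (hy : inBox y)
    {X : ℝ} (hX0 : 0 ≤ X) (hxX : ∀ i, x i ≤ X) :
    MonotoneOn (fun s => Real.exp (X * s) * f (psum (hmap s x) y)) (Set.Ici 0) := by
  set γ := fun s => psum (hmap s x) y
  set v := fun s => WithLp.toLp 2 fun i => x i * (1 - γ s i)
  have hH : ∀ s, HasDerivAt (fun s => Real.exp (X * s) * f (γ s))
      (X * Real.exp (X * s) * f (γ s) + Real.exp (X * s) * ⟪gradient f (γ s), v s⟫) s :=
    fun s => by
      have he := ((hasDerivAt_id s).const_mul X).exp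
      have hg := (hdiff (γ s)).hasGradientAt.hasDerivAt_comp (hasDerivAt_psum_hmap x y s)
      exact (he.mul hg).congr_deriv (by simp only [id, mul_one]; ring)
  refine monotoneOn_of_hasDerivWithinAt_nonneg (convex_Ici 0)
    (fun s _ => (hH s).continuousAt.continuousWithinAt) (fun s _ => (hH s).hasDerivWithinAt)
    fun s hs => ?_
  rw [interior_Ici, Set.mem_Ioi] at hs
  have hγ : inBox (γ s) := inBox_psum (inBox_hmap hs.le fun i => (hx i).1) hy
  have hinner : -(X * f (γ s)) ≤ ⟪gradient f (γ s), v s⟫ :=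
    hDR.neg_mul_le_inner_gradient hdiff hpos hγ hX0
      (fun i => mul_nonneg (hx i).1 (sub_nonneg.2 (hγ i).2))
      (fun i => mul_le_mul_of_nonneg_right (hxX i) (sub_nonneg.2 (hγ i).2))
  have := Real.exp_pos (X * s)
  nlinarith

theorem stmt0_general {d : ℕ} (f : EuclideanSpace ℝ (Fin d) → ℝ)
    (hdiff : Differentiable ℝ f) (hpos : ∀ x, inBox x → 0 ≤ f x)
    (hDR : DRSubmodular f)
    (x y : EuclideanSpace ℝ (Fin d)) (hx : inBox x) (hy : inBox y)
    (z : ℝ) (hz01 : z ∈ Set.Icc (0 : ℝ) 1) :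
    Real.exp (-z) * f y ≤ Real.exp (-(z * (⨆ j, x j))) * f y ∧
      Real.exp (-(z * (⨆ j, x j))) * f y ≤ f (psum (hmap z x) y) := by
  set X := ⨆ j, x j
  have hxX : ∀ i, x i ≤ X := fun i => le_ciSup (Set.finite_range _).bddAbove i
  have hX0 : 0 ≤ X := Real.iSup_nonneg fun i => (hx i).1
  have hX1 : X ≤ 1 := Real.iSup_le (fun i => (hx i).2) zero_le_one
  refine ⟨mul_le_mul_of_nonneg_right (Real.exp_le_exp.2 ?_) (hpos y hy), ?_⟩
  · exact neg_le_neg (mul_le_of_le_one_right hz01.1 hX1)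
  have hmono := hDR.monotoneOn_exp_mul_apply_psum_hmap hdiff hpos hx hy hX0 hxX
    Set.self_mem_Ici hz01.1 hz01.1
  have hy0 : psum (hmap 0 x) y = y := by ext i; simp [psum, hmap]
  rw [Real.exp_neg, inv_mul_le_iff₀ (Real.exp_pos _)]
  simpa [hy0, mul_comm] using hmono

/-- Lemma: lower bound under exponential reparametrization.
For a non-negative, differentiable, continuous DR-submodular `f` on `[0,1]^d`,
any `x, y ∈ [0,1]^d` and `z ∈ [0,1]`, with `x̄ = max_j x_j`,
`f(h_z(x) ⊕ y) ≥ e^{-z x̄} f(y) ≥ e^{-z} f(y)`. -/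
theorem stmt0 {d : ℕ} (hd : 0 < d) (f : EuclideanSpace ℝ (Fin d) → ℝ)
    (hdiff : Differentiable ℝ f) (hpos : ∀ x, inBox x → 0 ≤ f x)
    (hDR : DRSubmodular f)
    (x y : EuclideanSpace ℝ (Fin d)) (hx : inBox x) (hy : inBox y)
    (z : ℝ) (hz01 : z ∈ Set.Icc (0 : ℝ) 1) :
    Real.exp (-z) * f y ≤ Real.exp (-(z * (⨆ j, x j))) * f y ∧
      Real.exp (-(z * (⨆ j, x j))) * f y ≤ f (psum (hmap z x) y) :=
  stmt0_general f hdiff hpos hDR x y hx hy z hz01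
end
end

section
/- Let f : [0,1]^d → ℝ be a non-negative, continuously differentiable, M₁-Lipschitz, continuous DR-submodular function, and let F(x) = ∫₀¹ (e^{z−1} / ((1−e^{−1}) z)) · (f(1 − e^{−z x}) − f(0)) dz. Then F is differentiable on [0,1]^d and its gradient satisfies ∇F(x) = ∫₀¹ (e^{z−1} / (1−e^{−1})) · (∇f(1 − e^{−z x}) ⊙ e^{−z x}) dz, where ⊙ denotes the coordinate-wise product and e^{−z x} is the coordinate-wise exponential. -/
open scoped RealInnerProductSpace

noncomputable section

/-!
Differentiating under the integral sign: the `x`-derivative of `f (h_t x)` is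
`t • ∇f(h_t x) ⊙ e^{-t x}`, and its factor `t` cancels the singular weight `1 / t`, so the
differentiated integrand is jointly continuous in `(t, x)` and hence uniformly bounded for
`t ∈ [0,1]` and `x` in a ball. The same bound, through the mean value theorem and `h_t 0 = 0`,
makes the integrand itself bounded, hence integrable.
-/

open MeasureTheory InnerProductSpace Metric
open scoped Interval

section

variable {d : ℕ}

lemma hmap_zero_right (t : ℝ) : hmap t (0 : EuclideanSpace ℝ (Fin d)) = 0 := by
  ext i; simp [hmap]

lemma hasFDerivAt_hmap (t : ℝ) (x : EuclideanSpace ℝ (Fin d)) :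
    HasFDerivAt (hmap t)
      (Matrix.toEuclideanCLM (𝕜 := ℝ) (Matrix.diagonal fun i => t * Real.exp (-(t * x i)))) x := by
  rw [← hasFDerivWithinAt_univ, hasFDerivWithinAt_piLp]
  intro i
  have hexp : HasDerivAt (fun s => 1 - Real.exp (-(t * s))) (t * Real.exp (-(t * x i))) (x i) := by
    simpa [mul_comm] using (((hasDerivAt_id (x i)).const_mul t).neg.exp).const_sub 1
  have hcomp := hexp.comp_hasFDerivAt x (PiLp.hasFDerivAt_apply (𝕜 := ℝ) 2 x i)
  refine hcomp.hasFDerivWithinAt.congr_fderiv ?_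
  ext u
  simp [Matrix.ofLp_toEuclideanCLM, Matrix.mulVec_diagonal]

lemma hasFDerivAt_div_mul_comp_hmap {f : EuclideanSpace ℝ (Fin d) → ℝ} {t : ℝ} (ht : t ≠ 0)
    (c : ℝ) {x : EuclideanSpace ℝ (Fin d)} (hf : DifferentiableAt ℝ f (hmap t x)) :
    HasFDerivAt (fun y => c / t * (f (hmap t y) - f 0))
      (toDual ℝ _ (c • had (gradient f (hmap t x)) (expv t x))) x := by
  have hgrad : fderiv ℝ f (hmap t x) = toDual ℝ _ (gradient f (hmap t x)) :=
    ((toDual ℝ _).apply_symm_apply _).symm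
  have hcomp := ((hf.hasFDerivAt.comp x (hasFDerivAt_hmap t x)).sub_const (f 0)).const_mul (c / t)
  refine hcomp.congr_fderiv (ContinuousLinearMap.ext fun u => ?_)
  simp only [hgrad, smul_apply, ContinuousLinearMap.coe_comp,
    Function.comp_apply, toDual_apply_apply, smul_eq_mul, PiLp.inner_apply, Finset.mul_sum]
  refine Finset.sum_congr rfl fun i _ => ?_
  simp only [RCLike.inner_apply, conj_trivial, Matrix.ofLp_toEuclideanCLM, Matrix.mulVec_diagonal,
    PiLp.smul_apply, had, expv, smul_eq_mul]
  field_simp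

lemma continuous_smul_had_gradient_comp_hmap {f : EuclideanSpace ℝ (Fin d) → ℝ} {c : ℝ → ℝ}
    (hf : ContDiff ℝ 1 f) (hc : Continuous c) :
    Continuous fun p : ℝ × EuclideanSpace ℝ (Fin d) =>
      c p.1 • had (gradient f (hmap p.1 p.2)) (expv p.1 p.2) := by
  have : Continuous (gradient f) :=
    (toDual ℝ _).symm.continuous.comp (hf.continuous_fderiv one_ne_zero)
  unfold had expv hmap
  fun_prop

theorem hasGradientAt_integral_div_mul_comp_hmap {f : EuclideanSpace ℝ (Fin d) → ℝ} {c : ℝ → ℝ}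
    (hf : ContDiff ℝ 1 f) (hc : Continuous c) (x₀ : EuclideanSpace ℝ (Fin d)) :
    HasGradientAt (fun x => ∫ t in (0:ℝ)..1, c t / t * (f (hmap t x) - f 0))
      (∫ t in (0:ℝ)..1, c t • had (gradient f (hmap t x₀)) (expv t x₀)) x₀ := by
  set Φ : ℝ × EuclideanSpace ℝ (Fin d) → EuclideanSpace ℝ (Fin d) :=
    fun p => c p.1 • had (gradient f (hmap p.1 p.2)) (expv p.1 p.2)
  have hΦ : Continuous Φ := continuous_smul_had_gradient_comp_hmap hf hc
  set R := ‖x₀‖ + 1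
  obtain ⟨C, hC⟩ := (isCompact_Icc.prod (isCompact_closedBall 0 R)).exists_bound_of_continuousOn
    (hΦ.continuousOn (s := Set.Icc 0 1 ×ˢ closedBall 0 R))
  have hderiv : ∀ t ∈ Ι (0:ℝ) 1, ∀ x, HasFDerivAt (fun y => c t / t * (f (hmap t y) - f 0))
      (toDual ℝ _ (Φ (t, x))) x := fun t ht x =>
    hasFDerivAt_div_mul_comp_hmap (Set.uIoc_of_le (zero_le_one' ℝ) ▸ ht).1.ne' (c t)
      ((hf.differentiable one_ne_zero) _)
  have hbound : ∀ t ∈ Ι (0:ℝ) 1, ∀ x ∈ ball (0 : EuclideanSpace ℝ (Fin d)) R,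
      ‖toDual ℝ _ (Φ (t, x))‖ ≤ C := by
    intro t ht x hx
    rw [Set.uIoc_of_le zero_le_one] at ht
    rw [LinearIsometryEquiv.norm_map]
    exact hC (t, x) ⟨Set.Ioc_subset_Icc_self ht, ball_subset_closedBall hx⟩
  have hmeas : ∀ x, AEStronglyMeasurable (fun t => c t / t * (f (hmap t x) - f 0))
      (volume.restrict (Ι 0 1)) := by
    intro x
    have : Continuous fun t => f (hmap t x) := by
      have := hf.continuous
      unfold hmap
      fun_prop
    exact ((hc.measurable.div measurable_id).mul (this.measurable.sub_const _)).aestronglyMeasurable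
  have hint : IntervalIntegrable (fun t => c t / t * (f (hmap t x₀) - f 0)) volume 0 1 := by
    refine (intervalIntegrable_const (c := C * ‖x₀‖)).mono_fun' (hmeas x₀)
      ((ae_restrict_iff' measurableSet_uIoc).2 (ae_of_all _ fun t ht => ?_))
    have := (convex_ball 0 R).norm_image_sub_le_of_norm_hasFDerivWithin_le
      (fun x _ => (hderiv t ht x).hasFDerivWithinAt) (hbound t ht)
      (mem_ball_self (by positivity)) (mem_ball_zero_iff.2 (lt_add_one _))
    simpa [hmap_zero_right] using this
  have key := intervalIntegral.hasFDerivAt_integral_of_dominated_of_fderiv_le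
    (isOpen_ball.mem_nhds (mem_ball_zero_iff.2 (lt_add_one _))) (Filter.Eventually.of_forall hmeas)
    hint ((toDual ℝ _).continuous.comp (hΦ.comp (Continuous.prodMk_left x₀))).aestronglyMeasurable
    (ae_of_all _ hbound) intervalIntegrable_const (ae_of_all _ fun t ht x _ => hderiv t ht x)
  rw [hasGradientAt_iff_hasFDerivAt]
  exact key.congr_fderiv <|
    (toDual ℝ (EuclideanSpace ℝ (Fin d))).toLinearIsometry.intervalIntegral_comp_comm _

end

theorem stmt2_general {d : ℕ} (f : EuclideanSpace ℝ (Fin d) → ℝ)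
    (hf : ContDiff ℝ 1 f) :
    ∀ x : EuclideanSpace ℝ (Fin d), inBox x →
      DifferentiableAt ℝ (surrogate f) x ∧
      gradient (surrogate f) x =
        ∫ z in (0:ℝ)..1, (Real.exp (z - 1) / (1 - Real.exp (-1))) •
          had (gradient f (hmap z x)) (expv z x) := by
  intro x _
  have hgrad := hasGradientAt_integral_div_mul_comp_hmap
    (c := fun z => Real.exp (z - 1) / (1 - Real.exp (-1))) hf (by fun_prop) x
  simp only [div_div] at hgrad
  exact ⟨hgrad.differentiableAt, hgrad.gradient⟩

/-- Gradient of the surrogate potential.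
For a non-negative, continuously differentiable, `M₁`-Lipschitz, continuous DR-submodular
`f`, the surrogate `F` is differentiable on `[0,1]^d` with
`∇F(x) = ∫₀¹ (e^{z-1}/(1-e⁻¹)) (∇f(1 - e^{-z x}) ⊙ e^{-z x}) dz`. -/
theorem stmt2 {d : ℕ} (f : EuclideanSpace ℝ (Fin d) → ℝ) (M₁ : ℝ)
    (hf : ContDiff ℝ 1 f) (hpos : ∀ x, inBox x → 0 ≤ f x)
    (hLip : ∀ x, inBox x → ‖gradient f x‖ ≤ M₁) (hDR : DRSubmodular f) :
    ∀ x : EuclideanSpace ℝ (Fin d), inBox x →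
      DifferentiableAt ℝ (surrogate f) x ∧
      gradient (surrogate f) x =
        ∫ z in (0:ℝ)..1, (Real.exp (z - 1) / (1 - Real.exp (-1))) •
          had (gradient f (hmap z x)) (expv z x) :=
  stmt2_general f hf
end
end

section
/- Let f : [0,1]^d → ℝ be a non-negative, continuously differentiable, M₁-Lipschitz, continuous DR-submodular function, and let F be the surrogate potential. Then for every x ∈ [0,1]^d: (1 − e^{−1}) · ⟨∇F(x), −x⟩ ≥ −f(h(x)) + ∫₀¹ e^{z−1} f(h_z(x)) dz, where h(x) = 1 − e^{−x} and h_z(x) = 1 − e^{−z x} coordinate-wise. -/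
open scoped RealInnerProductSpace

noncomputable section

/-! Writing `g = f ∘ h`, one has `f (h_z x) = g (z • x)`, so
`F x = ∫₀¹ e^{z-1} / ((1 - e⁻¹) z) * (g (z • x) - g 0) dz`. Differentiating under the integral
sign, the factor `z` produced by the chain rule cancels the singular weight `1 / z`, and
`(1 - e⁻¹) ⟪∇F x, x⟫ = ∫₀¹ e^{z-1} (d/dz) g (z • x) dz`. Integration by parts turns this into
`g x - e⁻¹ g 0 - ∫₀¹ e^{z-1} g (z • x) dz`, and `f 0 ≥ 0` gives the inequality. -/

open Metric Set MeasureTheory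

section Radial

variable {E : Type*} [NormedAddCommGroup E] [NormedSpace ℝ E]

theorem norm_smul_le_add_one_of_mem_ball {x y : E} (hy : y ∈ ball x 1) {z : ℝ} (hz : z ∈ Ioc 0 1) :
    ‖z • y‖ ≤ ‖x‖ + 1 := by
  rw [norm_smul, Real.norm_of_nonneg hz.1.le]
  calc z * ‖y‖ ≤ ‖y‖ := mul_le_of_le_one_left (norm_nonneg y) hz.2
    _ ≤ ‖x‖ + ‖y - x‖ := norm_le_norm_add_norm_sub' y x
    _ ≤ ‖x‖ + 1 := by rw [mem_ball_iff_norm] at hy; linarith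

theorem measurable_div_mul_sub_comp_smul {g : E → ℝ} (hg : Continuous g) {w : ℝ → ℝ}
    (hw : Measurable w) (y : E) : Measurable fun z : ℝ => w z / z * (g (z • y) - g 0) :=
  (hw.div measurable_id).mul
    ((hg.comp (continuous_id.smul continuous_const)).measurable.sub_const _)

theorem hasFDerivAt_div_mul_sub_comp_smul {g : E → ℝ} (hg : Differentiable ℝ g) (c : ℝ)
    {z : ℝ} (hz : z ≠ 0) (y : E) :
    HasFDerivAt (fun y => c / z * (g (z • y) - g 0)) (c • fderiv ℝ g (z • y)) y := by
  refine ((((hg (z • y)).hasFDerivAt.comp y ((hasFDerivAt_id y).const_smul z)).sub_const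
    (g 0)).const_mul (c / z)).congr_fderiv (ContinuousLinearMap.ext fun v => ?_)
  simp only [FunLike.coe_smul, ContinuousLinearMap.coe_comp, Pi.smul_apply,
    Function.comp_apply, ContinuousLinearMap.id_apply, map_smul, smul_eq_mul]
  field_simp

-- The `1 / z` singularity is absorbed by the mean value bound `|g (z • x) - g 0| ≤ C z ‖x‖`.
theorem intervalIntegrable_div_mul_sub_comp_smul [ProperSpace E] {g : E → ℝ}
    (hg : ContDiff ℝ 1 g) {w : ℝ → ℝ} (hw : Continuous w) (x : E) :
    IntervalIntegrable (fun z => w z / z * (g (z • x) - g 0)) volume 0 1 := by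
  obtain ⟨C, hC⟩ := (isCompact_closedBall (0 : E) ‖x‖).exists_bound_of_continuousOn
    (hg.continuous_fderiv one_ne_zero).continuousOn
  have hle : ∀ z ∈ Ioc (0:ℝ) 1, ‖w z / z * (g (z • x) - g 0)‖ ≤ |w z| * C * ‖x‖ := by
    intro z hz
    have hzx : ‖z • x‖ ≤ ‖x‖ := by
      rw [norm_smul, Real.norm_of_nonneg hz.1.le]
      exact mul_le_of_le_one_left (norm_nonneg x) hz.2
    have hmvt : ‖g (z • x) - g 0‖ ≤ C * ‖z • x - 0‖ :=
      (convex_closedBall (0 : E) ‖x‖).norm_image_sub_le_of_norm_fderiv_le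
        (fun y _ => hg.differentiable one_ne_zero y) hC (mem_closedBall_self (norm_nonneg x))
        (mem_closedBall_zero_iff.2 hzx)
    rw [sub_zero, norm_smul, Real.norm_of_nonneg hz.1.le] at hmvt
    rw [norm_mul, norm_div, Real.norm_of_nonneg hz.1.le, Real.norm_eq_abs]
    calc |w z| / z * ‖g (z • x) - g 0‖ ≤ |w z| / z * (C * (z * ‖x‖)) := by
          gcongr; exact div_nonneg (abs_nonneg _) hz.1.le
      _ = |w z| * C * ‖x‖ := by field_simp [hz.1.ne']
  refine ((hw.abs.mul continuous_const).mul continuous_const : Continuous fun z => |w z| * C * ‖x‖)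
    |>.intervalIntegrable 0 1 |>.mono_fun'
      (measurable_div_mul_sub_comp_smul hg.continuous hw.measurable x).aestronglyMeasurable ?_
  rw [uIoc_of_le zero_le_one]
  exact (ae_restrict_iff' measurableSet_Ioc).2 (.of_forall hle)

theorem hasFDerivAt_integral_div_mul_sub_comp_smul [ProperSpace E] {g : E → ℝ}
    (hg : ContDiff ℝ 1 g) {w : ℝ → ℝ} (hw : Continuous w) (x : E) :
    HasFDerivAt (fun y => ∫ z in (0:ℝ)..1, w z / z * (g (z • y) - g 0))
      (∫ z in (0:ℝ)..1, w z • fderiv ℝ g (z • x)) x := by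
  have hg' : Continuous (fderiv ℝ g) := hg.continuous_fderiv one_ne_zero
  obtain ⟨C, hC⟩ := (isCompact_closedBall (0 : E) (‖x‖ + 1)).exists_bound_of_continuousOn
    hg'.continuousOn
  refine hasFDerivAt_integral_of_dominated_of_fderiv_le''
    (F' := fun y z => w z • fderiv ℝ g (z • y)) (bound := fun z => |w z| * C)
    (ball_mem_nhds x one_pos)
    (.of_forall fun y =>
      (measurable_div_mul_sub_comp_smul hg.continuous hw.measurable y).aestronglyMeasurable)
    (intervalIntegrable_div_mul_sub_comp_smul hg hw x)
    (hw.smul (hg'.comp (continuous_id.smul continuous_const))).aestronglyMeasurable ?_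
    ((hw.abs.mul continuous_const).intervalIntegrable 0 1) ?_ <;>
    rw [uIoc_of_le zero_le_one, ae_restrict_iff' measurableSet_Ioc] <;>
    refine .of_forall fun z hz y hy => ?_
  · rw [norm_smul, Real.norm_eq_abs]
    exact mul_le_mul_of_nonneg_left
      (hC _ (mem_closedBall_zero_iff.2 (norm_smul_le_add_one_of_mem_ball hy hz))) (abs_nonneg _)
  · exact hasFDerivAt_div_mul_sub_comp_smul (hg.differentiable one_ne_zero) (w z) hz.1.ne' y

def expPotential (c : ℝ) (g : E → ℝ) (x : E) : ℝ :=
  ∫ z in (0:ℝ)..1, Real.exp (z - 1) / (c * z) * (g (z • x) - g 0)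

theorem integral_exp_mul_deriv {φ φ' : ℝ → ℝ} (hφ : ∀ z ∈ uIcc (0:ℝ) 1, HasDerivAt φ (φ' z) z)
    (hφ' : IntervalIntegrable φ' volume 0 1) :
    ∫ z in (0:ℝ)..1, Real.exp (z - 1) * φ' z =
      φ 1 - Real.exp (-1) * φ 0 - ∫ z in (0:ℝ)..1, Real.exp (z - 1) * φ z := by
  have hexp : ∀ z ∈ uIcc (0:ℝ) 1, HasDerivAt (fun z => Real.exp (z - 1)) (Real.exp (z - 1)) z :=
    fun z _ => by simpa using ((hasDerivAt_id z).sub_const 1).exp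
  rw [intervalIntegral.integral_mul_deriv_eq_deriv_mul hexp hφ
    ((by fun_prop : Continuous fun z => Real.exp (z - 1)).intervalIntegrable 0 1) hφ']
  norm_num

theorem mul_fderiv_expPotential_apply_self [ProperSpace E] {g : E → ℝ} (hg : ContDiff ℝ 1 g)
    {c : ℝ} (hc : c ≠ 0) (x : E) :
    c * fderiv ℝ (expPotential c g) x x =
      g x - Real.exp (-1) * g 0 - ∫ z in (0:ℝ)..1, Real.exp (z - 1) * g (z • x) := by
  have hw : Continuous fun z => Real.exp (z - 1) / c := by fun_prop
  have hF : expPotential c g =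
      fun y => ∫ z in (0:ℝ)..1, Real.exp (z - 1) / c / z * (g (z • y) - g 0) := by
    funext y; simp only [expPotential, div_div]
  have hg' : Continuous fun z : ℝ => fderiv ℝ g (z • x) :=
    (hg.continuous_fderiv one_ne_zero).comp (continuous_id.smul continuous_const)
  have hradial : ∀ z : ℝ, HasDerivAt (fun z : ℝ => g (z • x)) (fderiv ℝ g (z • x) x) z := by
    intro z
    have := (hg.differentiable one_ne_zero (z • x)).hasFDerivAt.comp_hasDerivAt z
      ((hasDerivAt_id z).smul_const x)
    rwa [one_smul] at this
  rw [hF, (hasFDerivAt_integral_div_mul_sub_comp_smul hg hw x).fderiv,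
    ContinuousLinearMap.intervalIntegral_apply
      (φ := fun z => (Real.exp (z - 1) / c) • fderiv ℝ g (z • x))
      ((hw.smul hg').intervalIntegrable 0 1),
    ← intervalIntegral.integral_const_mul]
  calc ∫ z in (0:ℝ)..1, c * ((Real.exp (z - 1) / c) • fderiv ℝ g (z • x)) x
      = ∫ z in (0:ℝ)..1, Real.exp (z - 1) * fderiv ℝ g (z • x) x := by
        congr 1; funext z
        simp only [FunLike.coe_smul, Pi.smul_apply, smul_eq_mul]
        field_simp
    _ = g ((1:ℝ) • x) - Real.exp (-1) * g ((0:ℝ) • x) -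
          ∫ z in (0:ℝ)..1, Real.exp (z - 1) * g (z • x) :=
        integral_exp_mul_deriv (fun z _ => hradial z)
          ((hg'.clm_apply continuous_const).intervalIntegrable 0 1)
    _ = g x - Real.exp (-1) * g 0 - ∫ z in (0:ℝ)..1, Real.exp (z - 1) * g (z • x) := by
        rw [one_smul, zero_smul]

end Radial

theorem hmap_one_smul {d : ℕ} (z : ℝ) (x : EuclideanSpace ℝ (Fin d)) :
    hmap 1 (z • x) = hmap z x := by
  ext i; simp [hmap]

theorem contDiff_hmap {d : ℕ} (z : ℝ) {n : WithTop ℕ∞} : ContDiff ℝ n (hmap (d := d) z) :=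
  contDiff_piLp' 2 fun i => by simp only [hmap]; fun_prop

theorem hmap_zero {d : ℕ} (z : ℝ) : hmap z (0 : EuclideanSpace ℝ (Fin d)) = 0 := by
  ext i; simp [hmap]

theorem surrogate_eq_expPotential {d : ℕ} (f : EuclideanSpace ℝ (Fin d) → ℝ) :
    surrogate f = expPotential (1 - Real.exp (-1)) (f ∘ hmap 1) := by
  funext x; simp only [surrogate, expPotential, Function.comp_apply, hmap_one_smul, hmap_zero]

theorem stmt6_general {d : ℕ} (f : EuclideanSpace ℝ (Fin d) → ℝ)
    (hf : ContDiff ℝ 1 f) (hpos : ∀ x, inBox x → 0 ≤ f x) :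
    ∀ x : EuclideanSpace ℝ (Fin d), inBox x →
      -f (hmap 1 x) + (∫ z in (0:ℝ)..1, Real.exp (z - 1) * f (hmap z x)) ≤
        (1 - Real.exp (-1)) * @inner ℝ _ _ (gradient (surrogate f) x) (-x) := by
  intro x _
  have hc : 1 - Real.exp (-1) ≠ 0 := (sub_pos.2 (Real.exp_lt_one_iff.2 neg_one_lt_zero)).ne'
  have hf0 : 0 ≤ f 0 := hpos 0 fun i => by simp
  have key := mul_fderiv_expPotential_apply_self (hf.comp (contDiff_hmap 1)) hc x
  rw [gradient, InnerProductSpace.toDual_symm_apply, map_neg, mul_neg, surrogate_eq_expPotential,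
    key]
  simp only [Function.comp_apply, hmap_one_smul, hmap_zero]
  linarith [mul_nonneg (Real.exp_pos (-1)).le hf0]

/-- Cost-term lower bound.
For a non-negative, continuously differentiable, `M₁`-Lipschitz, continuous
DR-submodular `f` with surrogate potential `F`, for every `x ∈ [0,1]^d`:
`(1-e⁻¹)⟨∇F(x), -x⟩ ≥ -f(h(x)) + ∫₀¹ e^{z-1} f(h_z(x)) dz`. -/
theorem stmt6 {d : ℕ} (f : EuclideanSpace ℝ (Fin d) → ℝ) (M₁ : ℝ)
    (hf : ContDiff ℝ 1 f) (hpos : ∀ x, inBox x → 0 ≤ f x)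
    (hLip : ∀ x, inBox x → ‖gradient f x‖ ≤ M₁) (hDR : DRSubmodular f) :
    ∀ x : EuclideanSpace ℝ (Fin d), inBox x →
      -f (hmap 1 x) + (∫ z in (0:ℝ)..1, Real.exp (z - 1) * f (hmap z x)) ≤
        (1 - Real.exp (-1)) * @inner ℝ _ _ (gradient (surrogate f) x) (-x) :=
  stmt6_general f hf hpos
end
end

section
/- Let f : [0,1]^d → ℝ be a non-negative, continuously differentiable, M₁-Lipschitz, continuous DR-submodular function, and let F be the surrogate potential. Then for every x, y ∈ [0,1]^d: (1 − e^{−1}) · ⟨∇F(x), y⟩ ≥ (1/e) · f(y) − ∫₀¹ e^{z−1} f(h_z(x)) dz. -/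
open scoped RealInnerProductSpace

noncomputable section

namespace Stmt8Aux
open MeasureTheory Set
variable {d : ℕ}

lemma abs_coord_le_norm (x : EuclideanSpace ℝ (Fin d)) (i : Fin d) : |x i| ≤ ‖x‖ := by
  rw [EuclideanSpace.norm_eq]
  calc |x i| = Real.sqrt (‖x i‖ ^ 2) := by
        rw [Real.norm_eq_abs, Real.sqrt_sq_eq_abs, abs_abs]
    _ ≤ Real.sqrt (∑ j, ‖x j‖ ^ 2) :=
        Real.sqrt_le_sqrt (Finset.single_le_sum (f := fun j => ‖x j‖ ^ 2)
          (fun j _ => sq_nonneg _) (Finset.mem_univ i))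

lemma norm_le_of_coord {x : EuclideanSpace ℝ (Fin d)} {a : ℝ} (ha : 0 ≤ a)
    (h : ∀ i, |x i| ≤ a) : ‖x‖ ≤ a * Real.sqrt d := by
  rw [EuclideanSpace.norm_eq]
  have h1 : ∑ i, ‖x i‖ ^ 2 ≤ (d : ℝ) * a ^ 2 := by
    calc ∑ i, ‖x i‖ ^ 2 ≤ ∑ _i : Fin d, a ^ 2 :=
          Finset.sum_le_sum fun i _ => by
            rw [Real.norm_eq_abs]
            exact pow_le_pow_left₀ (abs_nonneg _) (h i) 2
      _ = (d : ℝ) * a ^ 2 := by simp [Finset.sum_const, Finset.card_univ]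
  calc Real.sqrt (∑ i, ‖x i‖ ^ 2) ≤ Real.sqrt ((d:ℝ) * a ^ 2) := Real.sqrt_le_sqrt h1
    _ = a * Real.sqrt d := by
        rw [Real.sqrt_mul (Nat.cast_nonneg d), Real.sqrt_sq ha, mul_comm]

def diagLM (c : Fin d → ℝ) :
    EuclideanSpace ℝ (Fin d) →ₗ[ℝ] EuclideanSpace ℝ (Fin d) where
  toFun w := WithLp.toLp 2 (fun i => c i * w i)
  map_add' w w' := PiLp.ext fun i => by
    simp [PiLp.add_apply, mul_add]
  map_smul' r w := PiLp.ext fun i => by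
    simp [PiLp.smul_apply, smul_eq_mul]; ring

def diagL : (Fin d → ℝ) →ₗ[ℝ]
    (EuclideanSpace ℝ (Fin d) →L[ℝ] EuclideanSpace ℝ (Fin d)) where
  toFun c := (diagLM c).toContinuousLinearMap
  map_add' c c' := ContinuousLinearMap.ext fun w => PiLp.ext fun i => by
    simp [diagLM, PiLp.add_apply, add_mul]
  map_smul' r c := ContinuousLinearMap.ext fun w => PiLp.ext fun i => by
    simp [diagLM, PiLp.smul_apply, smul_eq_mul]; ring

@[simp] lemma diagL_apply (c : Fin d → ℝ) (w : EuclideanSpace ℝ (Fin d)) (i : Fin d) :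
    diagL c w i = c i * w i := rfl

lemma diagL_norm_le {c : Fin d → ℝ} {B : ℝ} (hB : 0 ≤ B) (h : ∀ i, |c i| ≤ B) :
    ‖(diagL c : EuclideanSpace ℝ (Fin d) →L[ℝ] EuclideanSpace ℝ (Fin d))‖ ≤ B := by
  refine ContinuousLinearMap.opNorm_le_bound _ hB fun w => ?_
  rw [EuclideanSpace.norm_eq, EuclideanSpace.norm_eq]
  have h1 : ∑ i, ‖(diagL c w) i‖ ^ 2 ≤ B ^ 2 * ∑ i, ‖w i‖ ^ 2 := by
    rw [Finset.mul_sum]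
    refine Finset.sum_le_sum fun i _ => ?_
    rw [diagL_apply, Real.norm_eq_abs, Real.norm_eq_abs, abs_mul, mul_pow]
    exact mul_le_mul_of_nonneg_right (pow_le_pow_left₀ (abs_nonneg _) (h i) 2) (sq_nonneg _)
  calc Real.sqrt (∑ i, ‖(diagL c w) i‖ ^ 2) ≤ Real.sqrt (B ^ 2 * ∑ i, ‖w i‖ ^ 2) :=
        Real.sqrt_le_sqrt h1
    _ = B * Real.sqrt (∑ i, ‖w i‖ ^ 2) := by
        rw [Real.sqrt_mul (sq_nonneg B), Real.sqrt_sq hB]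

lemma continuous_diagL : Continuous (diagL (d := d)) :=
  diagL.continuous_of_finiteDimensional



lemma continuous_hmap (x : EuclideanSpace ℝ (Fin d)) :
    Continuous fun z : ℝ => hmap z x := by
  have h : Continuous fun z : ℝ => (fun i => 1 - Real.exp (-(z * x i)) : Fin d → ℝ) :=
    continuous_pi fun i =>
      continuous_const.sub ((Real.continuous_exp.comp ((continuous_id.mul continuous_const).neg)))
  exact ((EuclideanSpace.equiv (Fin d) ℝ).symm.continuous.comp h : _)

lemma hasFDerivAt_hmap (z : ℝ) (x : EuclideanSpace ℝ (Fin d)) :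
    HasFDerivAt (hmap z) (diagL fun i => z * Real.exp (-(z * x i))) x := by
  set e := EuclideanSpace.equiv (Fin d) ℝ with he
  have hG : HasFDerivAt (fun (u : Fin d → ℝ) (i : Fin d) => 1 - Real.exp (-(z * u i)))
      ((ContinuousLinearMap.pi fun i =>
        (z * Real.exp (-(z * x i))) • ContinuousLinearMap.proj i :
          (Fin d → ℝ) →L[ℝ] (Fin d → ℝ))) (e x) := by
    apply hasFDerivAt_pi.2
    intro i
    have h1 : HasDerivAt (fun t : ℝ => 1 - Real.exp (-(z * t)))
        (z * Real.exp (-(z * x i))) (x i) := by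
      have h2 : HasDerivAt (fun t : ℝ => -(z * t)) (-z) (x i) := by
        simpa using ((hasDerivAt_id (x i)).const_mul z).fun_neg
      have h4 := (h2.exp).const_sub 1
      exact h4.congr_deriv (by ring)
    exact HasDerivAt.comp_hasFDerivAt (f := fun u : Fin d → ℝ => u i) (e x) h1 (hasFDerivAt_apply i (e x))
  have comp := (e.symm.hasFDerivAt).comp x (hG.comp x e.hasFDerivAt)
  have hfun : (⇑e.symm ∘ (fun (u : Fin d → ℝ) (i : Fin d) => 1 - Real.exp (-(z * u i))) ∘ ⇑e)
      = hmap z := rfl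
  rw [hfun] at comp
  refine comp.congr_fderiv ?_
  ext w i
  simp [e]

lemma inner_grad (f : EuclideanSpace ℝ (Fin d) → ℝ) (w v : EuclideanSpace ℝ (Fin d)) :
    ⟪gradient f w, v⟫ = fderiv ℝ f w v := by
  rw [gradient, InnerProductSpace.toDual_symm_apply]

lemma fderiv_apply_eq_sum (f : EuclideanSpace ℝ (Fin d) → ℝ) (w v : EuclideanSpace ℝ (Fin d)) :
    fderiv ℝ f w v = ∑ i, gradient f w i * v i := by
  rw [← inner_grad, PiLp.inner_apply]
  simp [RCLike.inner_apply, conj_trivial, mul_comm]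


variable {f : EuclideanSpace ℝ (Fin d) → ℝ}

lemma hasDerivAt_line (hf : ContDiff ℝ 1 f) (a v : EuclideanSpace ℝ (Fin d)) (t : ℝ) :
    HasDerivAt (fun s : ℝ => f (a + s • v)) (fderiv ℝ f (a + t • v) v) t := by
  have h1 : HasDerivAt (fun s : ℝ => a + s • v) v t := by
    simpa using ((hasDerivAt_id t).smul_const v).const_add a
  exact ((hf.differentiable one_ne_zero (a + t • v)).hasFDerivAt).comp_hasDerivAt t h1

lemma fderiv_mono (hDR : DRSubmodular f) {a b v : EuclideanSpace ℝ (Fin d)}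
    (ha : inBox a) (hb : inBox b) (hab : ∀ i, a i ≤ b i) (hv : ∀ i, 0 ≤ v i) :
    fderiv ℝ f b v ≤ fderiv ℝ f a v := by
  rw [fderiv_apply_eq_sum, fderiv_apply_eq_sum]
  exact Finset.sum_le_sum fun i _ => mul_le_mul_of_nonneg_right (hDR a b ha hb hab i) (hv i)

lemma coord_add_smul (a v : EuclideanSpace ℝ (Fin d)) (t : ℝ) (i : Fin d) :
    (a + t • v) i = a i + t * v i := rfl

lemma L1 (hf : ContDiff ℝ 1 f) (hDR : DRSubmodular f) {a v : EuclideanSpace ℝ (Fin d)}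
    (ha : inBox a) (hv : ∀ i, 0 ≤ v i) (hav : inBox (a + v)) :
    f (a + v) - f a ≤ fderiv ℝ f a v := by
  obtain ⟨c, hc, hceq⟩ := exists_hasDerivAt_eq_slope (fun s : ℝ => f (a + s • v))
    (fun s => fderiv ℝ f (a + s • v) v) one_pos
    (Continuous.continuousOn (by
      exact hf.continuous.comp (continuous_const.add (continuous_id.smul continuous_const))))
    (fun s _ => hasDerivAt_line hf a v s)
  simp only [one_smul, zero_smul, add_zero, sub_zero, div_one] at hceq
  rw [← hceq]
  have hbox : inBox (a + c • v) := by
    intro i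
    rw [coord_add_smul]
    constructor
    · exact add_nonneg (ha i).1 (mul_nonneg hc.1.le (hv i))
    · have h2 : c * v i ≤ v i := by
        nlinarith [hv i, hc.2, hc.1]
      have := (hav i).2
      rw [show (a + v) i = a i + v i from rfl] at this
      linarith
  refine fderiv_mono hDR ha hbox (fun i => ?_) hv
  rw [coord_add_smul]
  nlinarith [hv i, hc.1]

lemma L2 (hf : ContDiff ℝ 1 f) (hDR : DRSubmodular f)
    (hpos : ∀ x, inBox x → 0 ≤ f x) {a w : EuclideanSpace ℝ (Fin d)} {θ : ℝ}
    (ha : inBox a) (hw : ∀ i, 0 ≤ w i) (hθ0 : 0 < θ) (hθ1 : θ < 1)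
    (hbig : inBox (a + (1/θ) • w)) :
    (1 - θ) * f a ≤ f (a + w) := by
  set T : ℝ := 1/θ with hT
  have hT1 : 1 < T := (one_lt_one_div hθ0 hθ1 : _)
  have hboxt : ∀ t : ℝ, 0 ≤ t → t ≤ T → inBox (a + t • w) := by
    intro t ht0 htT i
    rw [coord_add_smul]
    have := (hbig i).2
    rw [coord_add_smul] at this
    constructor
    · exact add_nonneg (ha i).1 (mul_nonneg ht0 (hw i))
    · nlinarith [hw i]
  have hcont : Continuous fun s : ℝ => f (a + s • w) :=
    hf.continuous.comp (continuous_const.add (continuous_id.smul continuous_const))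
  obtain ⟨c₁, hc₁, hceq₁⟩ := exists_hasDerivAt_eq_slope (fun s : ℝ => f (a + s • w))
    (fun s => fderiv ℝ f (a + s • w) w) one_pos hcont.continuousOn
    (fun s _ => hasDerivAt_line hf a w s)
  obtain ⟨c₂, hc₂, hceq₂⟩ := exists_hasDerivAt_eq_slope (fun s : ℝ => f (a + s • w))
    (fun s => fderiv ℝ f (a + s • w) w) hT1 hcont.continuousOn
    (fun s _ => hasDerivAt_line hf a w s)
  simp only [one_smul, zero_smul, add_zero, sub_zero, div_one] at hceq₁ hceq₂
  have hmono : fderiv ℝ f (a + c₂ • w) w ≤ fderiv ℝ f (a + c₁ • w) w := by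
    refine fderiv_mono hDR (hboxt c₁ hc₁.1.le (hc₁.2.le.trans hT1.le))
      (hboxt c₂ (by linarith [hc₂.1]) hc₂.2.le) (fun i => ?_) hw
    rw [coord_add_smul, coord_add_smul]
    nlinarith [hw i, hc₁.2, hc₂.1]
  rw [hceq₁, hceq₂] at hmono
  have hC : 0 ≤ f (a + T • w) := hpos _ (by simpa [hT] using hboxt T (by positivity) le_rfl)
  have hB : 0 ≤ f a := hpos _ ha
  have hkey : f (a + T • w) - f (a + w) ≤ (f (a + w) - f a) * (T - 1) := by
    have h := mul_le_mul_of_nonneg_right hmono (by linarith : (0:ℝ) ≤ T - 1)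
    rw [div_mul_cancel₀] at h
    · linarith
    · linarith
  have hTθ : T = 1/θ := hT
  have hθT : θ * T = 1 := by
    rw [hTθ]; field_simp
  nlinarith [mul_nonneg hθ0.le hC, mul_nonneg hθ0.le hB]

lemma key_ineq (hf : ContDiff ℝ 1 f) (hpos : ∀ x, inBox x → 0 ≤ f x)
    (hDR : DRSubmodular f) {x y : EuclideanSpace ℝ (Fin d)} (hx : inBox x) (hy : inBox y)
    {z : ℝ} (hz0 : 0 < z) (hz1 : z ≤ 1) :
    Real.exp (-z) * f y - f (hmap z x) ≤
      fderiv ℝ f (hmap z x) (WithLp.toLp 2 (fun i => Real.exp (-(z * x i)) * y i)) := by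
  set u : EuclideanSpace ℝ (Fin d) := hmap z x with hu
  have hui : ∀ i, u i = 1 - Real.exp (-(z * x i)) := fun i => rfl
  have hexple : ∀ i, Real.exp (-(z * x i)) ≤ 1 := fun i =>
    Real.exp_le_one_iff.2 (by nlinarith [(hx i).1])
  have hu_mem : inBox u := by
    intro i
    rw [hui i]
    constructor
    · linarith [hexple i]
    · have := Real.exp_pos (-(z * x i)); linarith
  set v : EuclideanSpace ℝ (Fin d) := WithLp.toLp 2 (fun i => (1 - u i) * y i) with hv
  have hv0 : ∀ i, 0 ≤ v i := fun i =>
    mul_nonneg (by linarith [(hu_mem i).2]) (hy i).1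
  have hP : ∀ i, (u + v) i = u i + (1 - u i) * y i := fun i => rfl
  have huv_mem : inBox (u + v) := by
    intro i
    rw [hP i]
    constructor
    · exact add_nonneg (hu_mem i).1 (hv0 i)
    · nlinarith [(hu_mem i).1, (hu_mem i).2, (hy i).1, (hy i).2]
  have key1 : f (u + v) - f u ≤ fderiv ℝ f u v := L1 hf hDR hu_mem hv0 huv_mem
  set θ : ℝ := 1 - Real.exp (-z) with hθ
  have hθ0 : 0 < θ := by
    have : Real.exp (-z) < 1 := Real.exp_lt_one_iff.2 (by linarith)
    simp only [hθ]; linarith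
  have hθ1 : θ < 1 := by
    have := Real.exp_pos (-z); simp only [hθ]; linarith
  set w : EuclideanSpace ℝ (Fin d) := WithLp.toLp 2 (fun i => u i * (1 - y i)) with hw
  have hw0 : ∀ i, 0 ≤ w i := fun i =>
    mul_nonneg (hu_mem i).1 (by linarith [(hy i).2])
  have huvw : u + v = y + w := by
    ext i
    show u i + v i = y i + w i
    simp only [hv, hw]
    ring
  have huθ : ∀ i, u i ≤ θ := by
    intro i
    rw [hui i]
    simp only [hθ]
    have : Real.exp (-z) ≤ Real.exp (-(z * x i)) :=
      Real.exp_le_exp.2 (by nlinarith [(hx i).2])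
    linarith
  have hbig : inBox (y + (1/θ) • w) := by
    intro i
    rw [coord_add_smul]
    have h1 : w i ≤ θ * (1 - y i) :=
      mul_le_mul_of_nonneg_right (huθ i) (by linarith [(hy i).2])
    constructor
    · exact add_nonneg (hy i).1 (mul_nonneg (by positivity) (hw0 i))
    · have h2 : (1/θ) * w i ≤ 1 - y i := by
        rw [div_mul_eq_mul_div, div_le_iff₀ hθ0]
        nlinarith
      linarith
  have key2 : (1 - θ) * f y ≤ f (y + w) := L2 hf hDR hpos hy hw0 hθ0 hθ1 hbig
  have hvv : v = WithLp.toLp 2 (fun i => Real.exp (-(z * x i)) * y i) := by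
    ext i
    simp only [hv, hui i]
    ring
  rw [← hvv]
  have h5 : (1 : ℝ) - θ = Real.exp (-z) := by rw [hθ]; ring
  rw [← huvw, h5] at key2
  linarith

def cz (z : ℝ) : ℝ := Real.exp (z - 1) / ((1 - Real.exp (-1)) * z)

lemma measurable_cz : Measurable cz :=
  (Real.measurable_exp.comp (measurable_id.sub_const 1)).div
    (measurable_id.const_mul _)

lemma hA : (0:ℝ) < 1 - Real.exp (-1) := by
  have : Real.exp (-1) < 1 := Real.exp_lt_one_iff.2 (by norm_num)
  linarith

lemma cz_nonneg {z : ℝ} (hz : 0 < z) : 0 ≤ cz z := by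
  have h1 := hA
  have := Real.exp_pos (z-1)
  unfold cz
  positivity

def Fd (f : EuclideanSpace ℝ (Fin d) → ℝ) (z : ℝ) (x : EuclideanSpace ℝ (Fin d)) :
    EuclideanSpace ℝ (Fin d) →L[ℝ] ℝ :=
  cz z • ((fderiv ℝ f (hmap z x)).comp (diagL fun i => z * Real.exp (-(z * x i))))

lemma continuous_FdPart (hf : ContDiff ℝ 1 f) (x₀ : EuclideanSpace ℝ (Fin d)) :
    Continuous fun z : ℝ =>
      (fderiv ℝ f (hmap z x₀)).comp (diagL fun i => z * Real.exp (-(z * x₀ i))) := by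
  have h1 : Continuous fun z : ℝ => fderiv ℝ f (hmap z x₀) :=
    (hf.continuous_fderiv one_ne_zero).comp (continuous_hmap x₀)
  have h2 : Continuous fun z : ℝ =>
      (diagL fun i => z * Real.exp (-(z * x₀ i)) :
        EuclideanSpace ℝ (Fin d) →L[ℝ] EuclideanSpace ℝ (Fin d)) :=
    continuous_diagL.comp (continuous_pi fun i =>
      continuous_id.mul (Real.continuous_exp.comp ((continuous_id.mul continuous_const).neg)))
  exact h1.clm_comp h2

lemma surrogate_deriv (hf : ContDiff ℝ 1 f) (x₀ : EuclideanSpace ℝ (Fin d)) (hx₀ : inBox x₀) :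
    HasFDerivAt (surrogate f)
      (∫ z in Set.Ioc (0:ℝ) 1, Fd f z x₀ ∂MeasureTheory.volume) x₀ ∧
    MeasureTheory.Integrable (fun z => Fd f z x₀)
      (MeasureTheory.volume.restrict (Set.Ioc (0:ℝ) 1)) := by
  classical
  set μ := MeasureTheory.volume.restrict (Set.Ioc (0:ℝ) 1) with hμ
  haveI hfin : MeasureTheory.IsFiniteMeasure μ := by
    constructor
    rw [hμ, MeasureTheory.Measure.restrict_apply_univ, Real.volume_Ioc]
    exact ENNReal.ofReal_lt_top
  set R : ℝ := Real.exp 2 * Real.sqrt d + 1 with hR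
  set K := Metric.closedBall (0 : EuclideanSpace ℝ (Fin d)) R with hK
  obtain ⟨C, hC⟩ := (isCompact_closedBall (0 : EuclideanSpace ℝ (Fin d)) R).exists_bound_of_continuousOn
    ((hf.continuous_fderiv one_ne_zero).continuousOn)
  have h0K : (0 : EuclideanSpace ℝ (Fin d)) ∈ K := by
    rw [hK]
    refine Metric.mem_closedBall_self ?_
    rw [hR]; positivity
  have hC0 : 0 ≤ C := le_trans (norm_nonneg _) (hC 0 h0K)
  -- membership of hmap z x' in K for x' in the unit ball around x₀
  have hcoord : ∀ x' ∈ Metric.ball x₀ 1, ∀ i, |x' i| ≤ 2 := by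
    intro x' hx' i
    have h1 : |x' i - x₀ i| ≤ ‖x' - x₀‖ := by
      have := abs_coord_le_norm (x' - x₀) i
      simpa using this
    have h2 : ‖x' - x₀‖ < 1 := by
      rw [← dist_eq_norm]; exact hx'
    have h3 : |x₀ i| ≤ 1 := by
      rw [abs_le]; exact ⟨by linarith [(hx₀ i).1], (hx₀ i).2⟩
    calc |x' i| = |x₀ i + (x' i - x₀ i)| := by ring_nf
      _ ≤ |x₀ i| + |x' i - x₀ i| := abs_add_le _ _
      _ ≤ 2 := by linarith
  have hexp_le : ∀ z ∈ Set.Ioc (0:ℝ) 1, ∀ x' ∈ Metric.ball x₀ 1, ∀ i,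
      Real.exp (-(z * x' i)) ≤ Real.exp 2 := by
    intro z hz x' hx' i
    refine Real.exp_le_exp.2 ?_
    have h1 := hcoord x' hx' i
    rw [abs_le] at h1
    nlinarith [hz.1, hz.2]
  have hmemK : ∀ z ∈ Set.Ioc (0:ℝ) 1, ∀ x' ∈ Metric.ball x₀ 1, hmap z x' ∈ K := by
    intro z hz x' hx'
    rw [hK, Metric.mem_closedBall, dist_zero_right]
    have h1 : ∀ i, |hmap z x' i| ≤ Real.exp 2 := by
      intro i
      have h2 := hexp_le z hz x' hx' i
      have h3 := Real.exp_pos (-(z * x' i))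
      have h4 : (1:ℝ) ≤ Real.exp 2 := by
        rw [show (2:ℝ) = 2 from rfl]
        exact Real.one_le_exp (by norm_num)
      rw [show hmap z x' i = 1 - Real.exp (-(z * x' i)) from rfl, abs_le]
      constructor <;> linarith
    calc ‖hmap z x'‖ ≤ Real.exp 2 * Real.sqrt d :=
          norm_le_of_coord (Real.exp_pos 2).le h1
      _ ≤ R := by rw [hR]; linarith
  -- norm bound for Fd
  have hFdbound : ∀ z ∈ Set.Ioc (0:ℝ) 1, ∀ x' ∈ Metric.ball x₀ 1,
      ‖Fd f z x'‖ ≤ cz z * (C * (z * Real.exp 2)) := by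
    intro z hz x' hx'
    rw [Fd]
    refine le_trans (ContinuousLinearMap.opNorm_smul_le _ _) ?_
    rw [Real.norm_eq_abs, abs_of_nonneg (cz_nonneg hz.1)]
    refine mul_le_mul_of_nonneg_left ?_ (cz_nonneg hz.1)
    refine le_trans (ContinuousLinearMap.opNorm_comp_le _ _) ?_
    refine mul_le_mul (hC _ (hmemK z hz x' hx')) ?_ (norm_nonneg _) hC0
    refine diagL_norm_le (mul_nonneg hz.1.le (Real.exp_pos 2).le) fun i => ?_
    rw [abs_of_nonneg (mul_nonneg hz.1.le (Real.exp_pos _).le)]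
    exact mul_le_mul_of_nonneg_left (hexp_le z hz x' hx' i) hz.1.le
  -- the integrand family
  set Φ : EuclideanSpace ℝ (Fin d) → ℝ → ℝ :=
    fun x' z => cz z * (f (hmap z x') - f 0) with hΦ
  have hsur : surrogate f = fun x' => ∫ z, Φ x' z ∂μ := by
    funext x'
    rw [surrogate, intervalIntegral.integral_of_le zero_le_one]
    rfl
  -- measurability in z for each x'
  have hmeas : ∀ x' : EuclideanSpace ℝ (Fin d),
      MeasureTheory.AEStronglyMeasurable (Φ x') μ := by
    intro x'
    refine (measurable_cz.mul ?_).aestronglyMeasurable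
    exact ((hf.continuous.comp (continuous_hmap x')).sub continuous_const).measurable
  -- integrability of Φ x₀
  have hliploc : ∀ z ∈ Set.Ioc (0:ℝ) 1, |f (hmap z x₀) - f 0| ≤ C * (z * Real.sqrt d) := by
    intro z hz
    have hmem : hmap z x₀ ∈ K := hmemK z hz x₀ (Metric.mem_ball_self one_pos)
    have hlip := (convex_closedBall (0 : EuclideanSpace ℝ (Fin d)) R).norm_image_sub_le_of_norm_fderiv_le
      (fun w _ => (hf.differentiable one_ne_zero).differentiableAt) (fun w hw => hC w hw)
      h0K hmem
    have hn : ‖hmap z x₀ - 0‖ ≤ z * Real.sqrt d := by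
      rw [sub_zero]
      refine norm_le_of_coord hz.1.le fun i => ?_
      have h1 : 1 - Real.exp (-(z * x₀ i)) ≤ z * x₀ i := by
        have := Real.add_one_le_exp (-(z * x₀ i))
        linarith
      have h2 : 0 ≤ 1 - Real.exp (-(z * x₀ i)) := by
        have : Real.exp (-(z * x₀ i)) ≤ 1 :=
          Real.exp_le_one_iff.2 (by nlinarith [(hx₀ i).1, hz.1])
        linarith
      rw [show hmap z x₀ i = 1 - Real.exp (-(z * x₀ i)) from rfl, abs_of_nonneg h2]
      nlinarith [(hx₀ i).1, (hx₀ i).2, hz.1]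
    calc |f (hmap z x₀) - f 0| = ‖f (hmap z x₀) - f 0‖ := rfl
      _ ≤ C * ‖hmap z x₀ - 0‖ := hlip
      _ ≤ C * (z * Real.sqrt d) := mul_le_mul_of_nonneg_left hn hC0
  have hInt0 : MeasureTheory.Integrable (Φ x₀) μ := by
    refine MeasureTheory.Integrable.mono'
      (MeasureTheory.integrable_const (C * Real.sqrt d / (1 - Real.exp (-1)))) (hmeas x₀) ?_
    filter_upwards [MeasureTheory.ae_restrict_mem measurableSet_Ioc] with z hz
    have h1 := hliploc z hz
    have h2 : cz z * (C * (z * Real.sqrt d)) =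
        Real.exp (z - 1) * (C * Real.sqrt d) / (1 - Real.exp (-1)) := by
      have hzne : z ≠ 0 := hz.1.ne'
      have hAne : (1 - Real.exp (-1)) ≠ 0 := ne_of_gt hA
      rw [cz]
      field_simp
    have h3 : Real.exp (z - 1) ≤ 1 := Real.exp_le_one_iff.2 (by linarith [hz.2])
    calc ‖Φ x₀ z‖ = cz z * |f (hmap z x₀) - f 0| := by
          rw [hΦ, Real.norm_eq_abs, abs_mul, abs_of_nonneg (cz_nonneg hz.1)]
      _ ≤ cz z * (C * (z * Real.sqrt d)) :=
          mul_le_mul_of_nonneg_left h1 (cz_nonneg hz.1)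
      _ = Real.exp (z - 1) * (C * Real.sqrt d) / (1 - Real.exp (-1)) := h2
      _ ≤ 1 * (C * Real.sqrt d) / (1 - Real.exp (-1)) := by
          have h4 : 0 ≤ C * Real.sqrt d := by positivity
          gcongr
          exact hA.le
      _ = C * Real.sqrt d / (1 - Real.exp (-1)) := by ring
  -- measurability of Fd at x₀
  have hFdmeas : MeasureTheory.AEStronglyMeasurable (fun z => Fd f z x₀) μ := by
    refine MeasureTheory.AEStronglyMeasurable.smul measurable_cz.aestronglyMeasurable ?_
    exact (continuous_FdPart hf x₀).aestronglyMeasurable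
  -- bound function and its integrability
  set bnd : ℝ → ℝ := fun z => cz z * (C * (z * Real.exp 2)) with hbnd
  have hbnd_meas : MeasureTheory.AEStronglyMeasurable bnd μ := by
    refine (measurable_cz.mul ?_).aestronglyMeasurable
    exact (measurable_const.mul (measurable_id.mul measurable_const)).comp measurable_id |>.mono le_rfl le_rfl
  have hbnd_int : MeasureTheory.Integrable bnd μ := by
    refine MeasureTheory.Integrable.mono'
      (MeasureTheory.integrable_const (C * Real.exp 2 / (1 - Real.exp (-1)))) hbnd_meas ?_
    filter_upwards [MeasureTheory.ae_restrict_mem measurableSet_Ioc] with z hz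
    have h2 : cz z * (C * (z * Real.exp 2)) =
        Real.exp (z - 1) * (C * Real.exp 2) / (1 - Real.exp (-1)) := by
      have hzne : z ≠ 0 := hz.1.ne'
      have hAne : (1 - Real.exp (-1)) ≠ 0 := ne_of_gt hA
      rw [cz]
      field_simp
    have h3 : Real.exp (z - 1) ≤ 1 := Real.exp_le_one_iff.2 (by linarith [hz.2])
    have h5 : 0 ≤ bnd z := by
      rw [hbnd]
      have := cz_nonneg hz.1
      have := hz.1
      positivity
    calc ‖bnd z‖ = bnd z := by rw [Real.norm_eq_abs, abs_of_nonneg h5]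
      _ = Real.exp (z - 1) * (C * Real.exp 2) / (1 - Real.exp (-1)) := h2
      _ ≤ 1 * (C * Real.exp 2) / (1 - Real.exp (-1)) := by
          have h4 : 0 ≤ C * Real.exp 2 := by positivity
          gcongr
          exact hA.le
      _ = C * Real.exp 2 / (1 - Real.exp (-1)) := by ring
  -- differentiability in x
  have hdiff : ∀ᵐ z ∂μ, ∀ x' ∈ Metric.ball x₀ 1, HasFDerivAt (Φ · z) (Fd f z x') x' := by
    filter_upwards [MeasureTheory.ae_restrict_mem measurableSet_Ioc] with z hz x' hx'
    have h1 := hasFDerivAt_hmap (d := d) z x'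
    have h2 := (hf.differentiable one_ne_zero (hmap z x')).hasFDerivAt
    exact ((h2.comp x' h1).sub_const (f 0)).const_mul (cz z)
  have hbound : ∀ᵐ z ∂μ, ∀ x' ∈ Metric.ball x₀ 1, ‖Fd f z x'‖ ≤ bnd z := by
    filter_upwards [MeasureTheory.ae_restrict_mem measurableSet_Ioc] with z hz x' hx'
    exact hFdbound z hz x' hx'
  have main := hasFDerivAt_integral_of_dominated_of_fderiv_le
    (F := Φ) (F' := fun x' z => Fd f z x') (x₀ := x₀) (bound := bnd)
    (Metric.ball_mem_nhds x₀ one_pos) (Filter.Eventually.of_forall hmeas) hInt0 hFdmeas hbound hbnd_int hdiff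
  have hint : MeasureTheory.Integrable (fun z => Fd f z x₀) μ := by
    refine MeasureTheory.Integrable.mono' hbnd_int hFdmeas ?_
    filter_upwards [MeasureTheory.ae_restrict_mem measurableSet_Ioc] with z hz
    exact hFdbound z hz x₀ (Metric.mem_ball_self one_pos)
  constructor
  · rw [hsur]
    exact main
  · exact hint

lemma pointwise_final (hf : ContDiff ℝ 1 f) (hpos : ∀ x, inBox x → 0 ≤ f x)
    (hDR : DRSubmodular f) {x y : EuclideanSpace ℝ (Fin d)} (hx : inBox x) (hy : inBox y)
    {z : ℝ} (hz : z ∈ Set.Ioc (0:ℝ) 1) :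
    Real.exp (-1) * f y - Real.exp (z - 1) * f (hmap z x) ≤
      (1 - Real.exp (-1)) * ((Fd f z x) y) := by
  set v : EuclideanSpace ℝ (Fin d) := WithLp.toLp 2 (fun i => Real.exp (-(z * x i)) * y i) with hv
  have happ : (Fd f z x) y = cz z * (z * fderiv ℝ f (hmap z x) v) := by
    have hdiag : (diagL fun i => z * Real.exp (-(z * x i)) :
        EuclideanSpace ℝ (Fin d) →L[ℝ] EuclideanSpace ℝ (Fin d)) y = z • v := by
      ext i
      rw [diagL_apply]
      show z * Real.exp (-(z * x i)) * y i = z * (Real.exp (-(z * x i)) * y i)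
      ring
    rw [Fd, ContinuousLinearMap.smul_apply, ContinuousLinearMap.comp_apply, hdiag,
      (fderiv ℝ f (hmap z x)).map_smul, smul_eq_mul, smul_eq_mul]
  have hcz : (1 - Real.exp (-1)) * (cz z * z) = Real.exp (z - 1) := by
    rw [cz]
    have hzne : z ≠ 0 := hz.1.ne'
    have hAne : (1 - Real.exp (-1)) ≠ 0 := ne_of_gt hA
    field_simp
  have hkey := key_ineq hf hpos hDR hx hy hz.1 hz.2
  have h2 := mul_le_mul_of_nonneg_left hkey (Real.exp_pos (z - 1)).le
  have h3 : Real.exp (z - 1) * Real.exp (-z) = Real.exp (-1) := by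
    rw [← Real.exp_add]
    ring_nf
  calc Real.exp (-1) * f y - Real.exp (z - 1) * f (hmap z x)
      = Real.exp (z - 1) * (Real.exp (-z) * f y - f (hmap z x)) := by
        rw [mul_sub, ← mul_assoc, h3]
    _ ≤ Real.exp (z - 1) * fderiv ℝ f (hmap z x) v := h2
    _ = (1 - Real.exp (-1)) * ((Fd f z x) y) := by
        rw [happ, ← hcz]
        ring

lemma final (M₁ : ℝ)
    (hf : ContDiff ℝ 1 f) (hpos : ∀ x, inBox x → 0 ≤ f x)
    (hLip : ∀ x, inBox x → ‖gradient f x‖ ≤ M₁) (hDR : DRSubmodular f) :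
    ∀ x y : EuclideanSpace ℝ (Fin d), inBox x → inBox y →
      (1 / Real.exp 1) * f y - (∫ z in (0:ℝ)..1, Real.exp (z - 1) * f (hmap z x)) ≤
        (1 - Real.exp (-1)) * @inner ℝ _ _ (gradient (surrogate f) x) y := by
  intro x y hx hy
  obtain ⟨hFd, hInt⟩ := surrogate_deriv hf x hx
  have hgrad : (⟪gradient (surrogate f) x, y⟫ : ℝ) =
      ∫ z in Set.Ioc (0:ℝ) 1, (Fd f z x) y ∂MeasureTheory.volume := by
    rw [inner_grad, hFd.fderiv]
    exact ContinuousLinearMap.integral_apply hInt y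
  have hInty : MeasureTheory.Integrable (fun z => (Fd f z x) y)
      (MeasureTheory.volume.restrict (Set.Ioc (0:ℝ) 1)) :=
    hInt.apply_continuousLinearMap y
  have hcont1 : Continuous fun z : ℝ => Real.exp (z - 1) * f (hmap z x) :=
    (Real.continuous_exp.comp (continuous_id.sub continuous_const)).mul
      (hf.continuous.comp (continuous_hmap x))
  have hcont2 : Continuous fun z : ℝ => Real.exp (-1) * f y - Real.exp (z - 1) * f (hmap z x) :=
    continuous_const.sub hcont1
  have hIntL : MeasureTheory.IntegrableOn
      (fun z : ℝ => Real.exp (-1) * f y - Real.exp (z - 1) * f (hmap z x))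
      (Set.Ioc (0:ℝ) 1) MeasureTheory.volume := hcont2.integrableOn_Ioc
  have hIntR : MeasureTheory.Integrable (fun z => (1 - Real.exp (-1)) * ((Fd f z x) y))
      (MeasureTheory.volume.restrict (Set.Ioc (0:ℝ) 1)) := hInty.const_mul _
  have hmono := MeasureTheory.setIntegral_mono_on hIntL hIntR measurableSet_Ioc
    (fun z hz => pointwise_final hf hpos hDR hx hy hz)
  have hsplit : ∫ z in Set.Ioc (0:ℝ) 1,
      (Real.exp (-1) * f y - Real.exp (z - 1) * f (hmap z x)) ∂MeasureTheory.volume =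
      Real.exp (-1) * f y -
        ∫ z in Set.Ioc (0:ℝ) 1, Real.exp (z - 1) * f (hmap z x) ∂MeasureTheory.volume := by
    rw [MeasureTheory.integral_sub (MeasureTheory.integrable_const _)
      hcont1.integrableOn_Ioc]
    congr 1
    rw [MeasureTheory.setIntegral_const, Real.volume_real_Ioc]
    simp
  have hRHS : ∫ z in Set.Ioc (0:ℝ) 1,
      ((1 - Real.exp (-1)) * ((Fd f z x) y)) ∂MeasureTheory.volume =
      (1 - Real.exp (-1)) * ∫ z in Set.Ioc (0:ℝ) 1, (Fd f z x) y ∂MeasureTheory.volume :=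
    MeasureTheory.integral_const_mul _ _
  rw [hsplit, hRHS, ← hgrad] at hmono
  rw [intervalIntegral.integral_of_le zero_le_one]
  have hexp : (1:ℝ) / Real.exp 1 = Real.exp (-1) := by
    rw [Real.exp_neg, one_div]
  rw [hexp]
  exact hmono

end Stmt8Aux


/-- Gain-term lower bound with the `1/e` factor.
For a non-negative, continuously differentiable, `M₁`-Lipschitz, continuous
DR-submodular `f` with surrogate potential `F`, for all `x, y ∈ [0,1]^d`:
`(1-e⁻¹)⟨∇F(x), y⟩ ≥ (1/e) f(y) - ∫₀¹ e^{z-1} f(h_z(x)) dz`. -/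
theorem stmt8 {d : ℕ} (f : EuclideanSpace ℝ (Fin d) → ℝ) (M₁ : ℝ)
    (hf : ContDiff ℝ 1 f) (hpos : ∀ x, inBox x → 0 ≤ f x)
    (hLip : ∀ x, inBox x → ‖gradient f x‖ ≤ M₁) (hDR : DRSubmodular f) :
    ∀ x y : EuclideanSpace ℝ (Fin d), inBox x → inBox y →
      (1 / Real.exp 1) * f y - (∫ z in (0:ℝ)..1, Real.exp (z - 1) * f (hmap z x)) ≤
        (1 - Real.exp (-1)) * @inner ℝ _ _ (gradient (surrogate f) x) y := by
  intro x y hx hy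
  exact Stmt8Aux.final M₁ hf hpos hLip hDR x y hx hy
end
end

section
/- Let f : [0,1]^d → ℝ be a non-negative, differentiable, continuous DR-submodular function. Then for every t ≥ 0 and every a, x ∈ [0,1]^d: f(1 − a ⊙ e^{−t x}) ≥ e^{−t} · [ f(1 − a) + Σ_{i=1}^{∞} (t^i / i!) · f(1 − a ⊙ (1−x)^i) ], where ⊙ denotes the coordinate-wise product, e^{−t x} the coordinate-wise exponential, and (1−x)^i the coordinate-wise i-th power. In particular, since every summand is non-negative, f(1 − a ⊙ e^{−t x}) ≥ e^{−t} f(1 − a). -/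
/-!
Write `Y i s = 1 - a ⊙ e^{-s x} ⊙ (1 - x)^i`, so that `Y i 0 = 1 - a ⊙ (1 - x)^i` and
`∂ₛ Y i = Y (i + 1) - Y i ≥ 0`. DR-submodularity makes `f` concave along nonnegative directions,
`f v ≤ f u + ⟪∇f u, v - u⟫` for `u ≤ v`, so `g i s = f (Y i s)` satisfies `g (i + 1) ≤ g i + g i'`.
For any nonnegative family with this property, `∑ₖ sᵏ/k! g k 0 ≤ eˢ g 0 s`: by induction on the
number of terms, the difference of the two sides vanishes at `0` and has nonnegative derivative,
by the induction hypothesis applied to the shifted family `g (· + 1)`.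
-/

open scoped RealInnerProductSpace

noncomputable section

open Finset Real

open scoped Nat

theorem hasDerivAt_sum_range_pow_div_factorial (c : ℕ → ℝ) (N : ℕ) (r : ℝ) :
    HasDerivAt (fun s => ∑ k ∈ range (N + 1), s ^ k / k ! * c k)
      (∑ k ∈ range N, r ^ k / k ! * c (k + 1)) r := by
  simp_rw [sum_range_succ' _ N]
  have hterm : ∀ k ∈ range N, HasDerivAt (fun s : ℝ => s ^ (k + 1) / (k + 1)! * c (k + 1))
      (r ^ k / k ! * c (k + 1)) r := fun k _ => by
    refine (((hasDerivAt_pow (k + 1) r).div_const _).mul_const _).congr_deriv ?_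
    rw [Nat.factorial_succ]
    push_cast
    field_simp
  simpa using (HasDerivAt.fun_sum hterm).add_const (c 0)

theorem sum_range_pow_div_factorial_mul_le_exp_mul (N : ℕ) {g g' : ℕ → ℝ → ℝ}
    (hg : ∀ i s, HasDerivAt (g i) (g' i s) s) (hg_nonneg : ∀ i s, 0 ≤ s → 0 ≤ g i s)
    (hg_succ : ∀ i s, 0 ≤ s → g (i + 1) s ≤ g i s + g' i s) {s : ℝ} (hs : 0 ≤ s) :
    ∑ k ∈ range N, s ^ k / k ! * g k 0 ≤ exp s * g 0 s := by
  induction N generalizing g g' s with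
  | zero => simpa using mul_nonneg (exp_pos s).le (hg_nonneg 0 s hs)
  | succ N ih =>
    set ψ : ℝ → ℝ := fun r => exp r * g 0 r - ∑ k ∈ range (N + 1), r ^ k / k ! * g k 0
    have hψ : ∀ r, HasDerivAt ψ
        (exp r * g 0 r + exp r * g' 0 r - ∑ k ∈ range N, r ^ k / k ! * g (k + 1) 0) r :=
      fun r => ((hasDerivAt_exp r).mul (hg 0 r)).sub
        (hasDerivAt_sum_range_pow_div_factorial (fun k => g k 0) N r)
    have hmono : MonotoneOn ψ (Set.Ici 0) := by
      refine monotoneOn_of_hasDerivWithinAt_nonneg (convex_Ici 0)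
        (fun r _ => (hψ r).continuousAt.continuousWithinAt)
        (fun r _ => (hψ r).hasDerivWithinAt) fun r hr => ?_
      rw [interior_Ici, Set.mem_Ioi] at hr
      have hshift := ih (fun i s => hg (i + 1) s) (fun i s => hg_nonneg (i + 1) s)
        (fun i s => hg_succ (i + 1) s) hr.le
      have := mul_le_mul_of_nonneg_left (hg_succ 0 r hr.le) (exp_pos r).le
      linarith
    have hψ0 : ψ 0 = 0 := by simp [ψ, sum_range_succ']
    have := hmono Set.self_mem_Ici hs hs
    linarith

theorem tsum_pow_div_factorial_mul_le_exp_mul {g g' : ℕ → ℝ → ℝ}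
    (hg : ∀ i s, HasDerivAt (g i) (g' i s) s) (hg_nonneg : ∀ i s, 0 ≤ s → 0 ≤ g i s)
    (hg_succ : ∀ i s, 0 ≤ s → g (i + 1) s ≤ g i s + g' i s) {s : ℝ} (hs : 0 ≤ s) :
    Summable (fun k => s ^ k / k ! * g k 0) ∧
      ∑' k, s ^ k / k ! * g k 0 ≤ exp s * g 0 s := by
  have hterm : ∀ k, 0 ≤ s ^ k / k ! * g k 0 := fun k => by
    have := hg_nonneg k 0 le_rfl
    positivity
  have hpartial := fun N => sum_range_pow_div_factorial_mul_le_exp_mul N hg hg_nonneg hg_succ hs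
  exact ⟨summable_of_sum_range_le hterm hpartial, Real.tsum_le_of_sum_range_le hterm hpartial⟩

section Box

variable {d : ℕ}

theorem DRSubmodular.le_add_inner_gradient_s10 {f : EuclideanSpace ℝ (Fin d) → ℝ}
    (hDR : DRSubmodular f) (hf : Differentiable ℝ f) {u v : EuclideanSpace ℝ (Fin d)}
    (hu : inBox u) (hv : inBox v) (huv : ∀ j, u j ≤ v j) :
    f v ≤ f u + ⟪gradient f u, v - u⟫ := by
  set γ : ℝ → EuclideanSpace ℝ (Fin d) := fun r => u + r • (v - u)
  have hγ : ∀ r, HasDerivAt (fun r => f (γ r)) ⟪gradient f (γ r), v - u⟫ r := fun r => by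
    rw [inner_gradient_left]
    have hline : HasDerivAt γ (v - u) r :=
      (((hasDerivAt_id r).smul_const (v - u)).const_add u).congr_deriv (one_smul ℝ _)
    exact (hf _).hasFDerivAt.comp_hasDerivAt r hline
  have hderiv_le : ∀ r ∈ interior (Set.Icc (0 : ℝ) 1),
      deriv (fun r => f (γ r)) r ≤ ⟪gradient f u, v - u⟫ := fun r hr => by
    rw [interior_Icc] at hr
    have hγu : ∀ j, u j ≤ γ r j := fun j => by
      simpa [γ] using mul_nonneg hr.1.le (sub_nonneg.2 (huv j))
    have hγbox : inBox (γ r) := fun j => by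
      obtain ⟨hu0, hu1⟩ := hu j
      obtain ⟨hv0, hv1⟩ := hv j
      simp only [γ, PiLp.add_apply, PiLp.smul_apply, PiLp.sub_apply, smul_eq_mul, Set.mem_Icc]
      constructor <;> nlinarith [hr.1, hr.2]
    rw [(hγ r).deriv, EuclideanSpace.inner_eq_star_dotProduct,
      EuclideanSpace.inner_eq_star_dotProduct]
    refine Finset.sum_le_sum fun j _ => ?_
    simpa [mul_comm] using
      mul_le_mul_of_nonneg_right (hDR u (γ r) hu hγbox hγu j) (sub_nonneg.2 (huv j))
  have := (convex_Icc (0 : ℝ) 1).image_sub_le_mul_sub_of_deriv_le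
    (fun r _ => (hγ r).continuousAt.continuousWithinAt)
    (fun r _ => (hγ r).differentiableAt.differentiableWithinAt) hderiv_le
    0 (by simp) 1 (by simp) zero_le_one
  simp only [γ, zero_smul, one_smul, add_zero, add_sub_cancel, mul_one, sub_zero] at this
  linarith

def greedyPath (a x : EuclideanSpace ℝ (Fin d)) (i : ℕ) (s : ℝ) : EuclideanSpace ℝ (Fin d) :=
  WithLp.toLp 2 fun j => 1 - a j * exp (-(s * x j)) * (1 - x j) ^ i

variable {a x : EuclideanSpace ℝ (Fin d)}

theorem inBox_greedyPath (ha : inBox a) (hx : inBox x) (i : ℕ) {s : ℝ} (hs : 0 ≤ s) :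
    inBox (greedyPath a x i s) := fun j => by
  obtain ⟨ha0, ha1⟩ := ha j
  obtain ⟨hx0, hx1⟩ := hx j
  have he : exp (-(s * x j)) ≤ 1 := exp_le_one_iff.2 (by nlinarith)
  have hp : (1 - x j) ^ i ≤ 1 := pow_le_one₀ (by linarith) (by linarith)
  have : 0 ≤ a j * exp (-(s * x j)) * (1 - x j) ^ i := by
    have : 0 ≤ 1 - x j := by linarith
    positivity
  have : a j * exp (-(s * x j)) * (1 - x j) ^ i ≤ 1 :=
    mul_le_one₀ (mul_le_one₀ ha1 (exp_pos _).le he) (by positivity) hp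
  simp only [greedyPath, PiLp.toLp_apply, Set.mem_Icc]
  constructor <;> linarith

theorem greedyPath_le_succ (ha : inBox a) (hx : inBox x) (i : ℕ) (s : ℝ) (j : Fin d) :
    greedyPath a x i s j ≤ greedyPath a x (i + 1) s j := by
  obtain ⟨hx0, hx1⟩ := hx j
  have : 0 ≤ a j * exp (-(s * x j)) * (1 - x j) ^ i * x j := by
    have := (ha j).1
    have : 0 ≤ 1 - x j := by linarith
    positivity
  simp only [greedyPath, PiLp.toLp_apply, pow_succ]
  linarith

theorem hasDerivAt_greedyPath (a x : EuclideanSpace ℝ (Fin d)) (i : ℕ) (s : ℝ) :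
    HasDerivAt (greedyPath a x i) (greedyPath a x (i + 1) s - greedyPath a x i s) s := by
  have hcoord : ∀ j, HasDerivAt (fun r => 1 - a j * exp (-(r * x j)) * (1 - x j) ^ i)
      ((greedyPath a x (i + 1) s - greedyPath a x i s) j) s := fun j => by
    refine ((((hasDerivAt_mul_const (x j)).neg.exp.const_mul (a j)).mul_const _).const_sub
      1).congr_deriv ?_
    simp only [greedyPath, PiLp.sub_apply, Pi.neg_apply, pow_succ]
    ring
  exact (PiLp.hasFDerivAt_toLp 2 _).comp_hasDerivAt s (hasDerivAt_pi.2 hcoord)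

end Box

/-- Buchbinder–Feldman Lemma 4.1, constant-direction case.
For a non-negative, differentiable, continuous DR-submodular `f`, every `t ≥ 0` and
`a, x ∈ [0,1]^d`:
`f(1 - a ⊙ e^{-t x}) ≥ e^{-t} [ f(1-a) + Σ_{i≥1} (tⁱ/i!) f(1 - a ⊙ (1-x)ⁱ) ]`,
and in particular (every summand being non-negative) `f(1 - a ⊙ e^{-t x}) ≥ e^{-t} f(1-a)`. -/
theorem stmt10 {d : ℕ} (f : EuclideanSpace ℝ (Fin d) → ℝ)
    (hdiff : Differentiable ℝ f) (hpos : ∀ x, inBox x → 0 ≤ f x)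
    (hDR : DRSubmodular f)
    (t : ℝ) (ht : 0 ≤ t) (a x : EuclideanSpace ℝ (Fin d))
    (ha : inBox a) (hx : inBox x) :
    Real.exp (-t) *
        (f (WithLp.toLp 2 (fun j => 1 - a j) : EuclideanSpace ℝ (Fin d)) +
          ∑' i : ℕ, (t ^ (i + 1) / (Nat.factorial (i + 1) : ℝ)) *
            f (WithLp.toLp 2 (fun j => 1 - a j * (1 - x j) ^ (i + 1)) : EuclideanSpace ℝ (Fin d))) ≤
      f (WithLp.toLp 2 (fun j => 1 - a j * Real.exp (-(t * x j))) : EuclideanSpace ℝ (Fin d)) ∧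
    Real.exp (-t) * f (WithLp.toLp 2 (fun j => 1 - a j) : EuclideanSpace ℝ (Fin d)) ≤
      f (WithLp.toLp 2 (fun j => 1 - a j * Real.exp (-(t * x j))) : EuclideanSpace ℝ (Fin d)) := by
  have hderiv : ∀ i s, HasDerivAt (fun r => f (greedyPath a x i r))
      ⟪gradient f (greedyPath a x i s), greedyPath a x (i + 1) s - greedyPath a x i s⟫ s :=
    fun i s => by
      rw [inner_gradient_left]
      exact (hdiff _).hasFDerivAt.comp_hasDerivAt s (hasDerivAt_greedyPath a x i s)
  obtain ⟨hsum, hle⟩ := tsum_pow_div_factorial_mul_le_exp_mul hderiv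
    (fun i s hs => hpos _ (inBox_greedyPath ha hx i hs))
    (fun i s hs => hDR.le_add_inner_gradient_s10 hdiff (inBox_greedyPath ha hx i hs)
      (inBox_greedyPath ha hx (i + 1) hs) (greedyPath_le_succ ha hx i s)) ht
  have htail : 0 ≤ ∑' i, t ^ (i + 1) / (i + 1)! * f (greedyPath a x (i + 1) 0) :=
    tsum_nonneg fun i => mul_nonneg (by positivity) (hpos _ (inBox_greedyPath ha hx (i + 1) le_rfl))
  rw [hsum.tsum_eq_zero_add] at hle
  simp only [greedyPath, zero_mul, neg_zero, exp_zero, mul_one, pow_zero, Nat.factorial_zero,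
    Nat.cast_one, div_one, one_mul] at hle htail
  have hmain := mul_le_mul_of_nonneg_left hle (exp_pos (-t)).le
  rw [← mul_assoc, ← exp_add, neg_add_cancel, exp_zero, one_mul] at hmain
  exact ⟨hmain,
    (mul_le_mul_of_nonneg_left (le_add_of_nonneg_right htail) (exp_pos _).le).trans hmain⟩
end
end

section
/- Let f : [0,1]^d → ℝ be a non-negative, continuously differentiable, M₁-Lipschitz, continuous DR-submodular function, and let F be the surrogate potential. Let Z be a random variable on [0,1] with probability density p(z) = e^{z−1} / (1 − e^{−1}). Then for every x ∈ [0,1]^d: E_Z[ ∇f(1 − e^{−Z x}) ⊙ e^{−Z x} ] = ∇F(x), i.e., the BQND estimator with an exact first-order oracle is an unbiased estimate of the surrogate gradient 𝔤(f,x) = ∇F(x). -/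
open scoped RealInnerProductSpace

noncomputable section

/-!
The surrogate `F` is a parametric integral over `z ∈ (0, 1]`. By the chain rule the integrand
`p(z) z⁻¹ (f(1 - e^{-z x}) - f 0)` has gradient `p(z) ∇f(1 - e^{-z x}) ⊙ e^{-z x}`: the factor `z`
produced by differentiating `e^{-z x}` cancels the singular `z⁻¹`. Differentiation under the
integral sign is justified by domination: with `h_z y = 1 - e^{-z y}`, the continuous map
`(z, y) ↦ ∇f(h_z y) ⊙ e^{-z y}` is bounded on the compact set `[0, 1] × closedBall 0 r`, and
since `h_z 0 = 0` the mean value theorem in `y` bounds `|f(h_z x) - f 0|` by `z B ‖x‖`, so the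
integrand itself is bounded.
-/

open MeasureTheory Metric Filter Topology

section ParametricGradient

variable {E α : Type*} [NormedAddCommGroup E] [InnerProductSpace ℝ E] [CompleteSpace E]
  [MeasurableSpace α] {μ : Measure α}

theorem hasGradientAt_integral_of_dominated_of_gradient_le {F : E → α → ℝ} {G : E → α → E}
    {x : E} {s : Set E} {bound : α → ℝ} (hs : s ∈ 𝓝 x)
    (hF_meas : ∀ᶠ y in 𝓝 x, AEStronglyMeasurable (F y) μ) (hF_int : Integrable (F x) μ)
    (hG_meas : AEStronglyMeasurable (G x) μ)
    (h_bound : ∀ᵐ a ∂μ, ∀ y ∈ s, ‖G y a‖ ≤ bound a) (bound_integrable : Integrable bound μ)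
    (h_grad : ∀ᵐ a ∂μ, ∀ y ∈ s, HasGradientAt (F · a) (G y a) y) :
    HasGradientAt (fun y => ∫ a, F y a ∂μ) (∫ a, G x a ∂μ) x := by
  let J := InnerProductSpace.toDual ℝ E
  have hJ : ∫ a, J (G x a) ∂μ = J (∫ a, G x a ∂μ) := J.toLinearIsometry.integral_comp_comm _
  rw [hasGradientAt_iff_hasFDerivAt, ← hJ]
  refine hasFDerivAt_integral_of_dominated_of_fderiv_le (F' := fun y a => J (G y a)) hs hF_meas
    hF_int (J.continuous.comp_aestronglyMeasurable hG_meas) ?_ bound_integrable ?_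
  · filter_upwards [h_bound] with a ha y hy
    simpa using ha y hy
  · filter_upwards [h_grad] with a ha y hy
    exact (ha y hy).hasFDerivAt

end ParametricGradient

section Coordinatewise

variable {ι : Type*} [Fintype ι]

theorem hasGradientAt_comp_toLp_coordwise {f : EuclideanSpace ℝ ι → ℝ} {φ : ℝ → ℝ}
    {φ' : ι → ℝ} {y : EuclideanSpace ℝ ι} (hφ : ∀ i, HasDerivAt φ (φ' i) (y i))
    (hf : DifferentiableAt ℝ f (WithLp.toLp 2 fun i => φ (y i))) :
    HasGradientAt (fun w : EuclideanSpace ℝ ι => f (WithLp.toLp 2 fun i => φ (w i)))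
      (WithLp.toLp 2 fun i => gradient f (WithLp.toLp 2 fun i => φ (y i)) i * φ' i) y := by
  let D : EuclideanSpace ℝ ι →L[ℝ] EuclideanSpace ℝ ι :=
    (PiLp.continuousLinearEquiv 2 ℝ fun _ : ι => ℝ).symm.toContinuousLinearMap ∘L
      ContinuousLinearMap.pi fun i => φ' i • PiLp.proj 2 (fun _ : ι => ℝ) i
  have hD : HasFDerivAt (fun w : EuclideanSpace ℝ ι => WithLp.toLp 2 fun i => φ (w i)) D y :=
    (PiLp.hasFDerivAt_toLp 2 _).comp y
      (hasFDerivAt_pi.2 fun i => (hφ i).comp_hasFDerivAt y (PiLp.hasFDerivAt_apply 2 y i))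
  rw [hasGradientAt_iff_hasFDerivAt]
  refine (hf.hasGradientAt.hasFDerivAt.comp y hD).congr_fderiv ?_
  ext u
  simp only [ContinuousLinearMap.comp_apply, InnerProductSpace.toDual_apply_apply,
    PiLp.inner_apply]
  refine Finset.sum_congr rfl fun i _ => ?_
  simp [D]
  ring

end Coordinatewise

theorem one_sub_exp_neg_one_pos : 0 < 1 - Real.exp (-1) :=
  sub_pos.2 (Real.exp_lt_one_iff.2 (by norm_num))

section Surrogate

variable {d : ℕ} {f : EuclideanSpace ℝ (Fin d) → ℝ}

theorem hasGradientAt_comp_hmap (hf : Differentiable ℝ f) (z : ℝ)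
    (y : EuclideanSpace ℝ (Fin d)) :
    HasGradientAt (fun w => f (hmap z w)) (z • had (gradient f (hmap z y)) (expv z y)) y := by
  have hφ : ∀ i, HasDerivAt (fun t => 1 - Real.exp (-(z * t)))
      (Real.exp (-(z * y i)) * z) (y i) := fun i => by
    simpa using ((hasDerivAt_id (y i)).const_mul z).neg.exp.const_sub 1
  show HasGradientAt (fun w : EuclideanSpace ℝ (Fin d) =>
    f (WithLp.toLp 2 fun i => 1 - Real.exp (-(z * w i)))) _ y
  convert hasGradientAt_comp_toLp_coordwise hφ (hf _) using 1
  ext i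
  simp only [had, expv, hmap, PiLp.smul_apply, PiLp.toLp_apply, smul_eq_mul]
  ring

theorem hasGradientAt_surrogate_integrand (hf : Differentiable ℝ f) {z : ℝ} (hz : z ≠ 0)
    (y : EuclideanSpace ℝ (Fin d)) :
    HasGradientAt (fun w => Real.exp (z - 1) / ((1 - Real.exp (-1)) * z) * (f (hmap z w) - f 0))
      ((Real.exp (z - 1) / (1 - Real.exp (-1))) • had (gradient f (hmap z y)) (expv z y)) y := by
  have h := ((hasGradientAt_comp_hmap hf z y).hasFDerivAt.sub_const (f 0)).const_mul
    (Real.exp (z - 1) / ((1 - Real.exp (-1)) * z))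
  have hgrad : (Real.exp (z - 1) / (1 - Real.exp (-1))) • had (gradient f (hmap z y)) (expv z y)
      = (Real.exp (z - 1) / ((1 - Real.exp (-1)) * z)) •
        z • had (gradient f (hmap z y)) (expv z y) := by
    rw [smul_smul]
    field_simp
  rw [hgrad, hasGradientAt_iff_hasFDerivAt, map_smulₛₗ]
  exact h

theorem continuous_hmap :
    Continuous fun p : ℝ × EuclideanSpace ℝ (Fin d) => hmap p.1 p.2 :=
  (PiLp.continuous_toLp 2 _).comp (continuous_pi fun i => by fun_prop)

theorem continuous_had_gradient_hmap (hf : ContDiff ℝ 1 f) :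
    Continuous fun p : ℝ × EuclideanSpace ℝ (Fin d) =>
      had (gradient f (hmap p.1 p.2)) (expv p.1 p.2) := by
  have hgrad : Continuous (gradient f) :=
    (InnerProductSpace.toDual ℝ _).symm.continuous.comp (hf.continuous_fderiv one_ne_zero)
  have hhmap : Continuous fun p : ℝ × EuclideanSpace ℝ (Fin d) => hmap p.1 p.2 := continuous_hmap
  exact (PiLp.continuous_toLp 2 _).comp (continuous_pi fun i => by fun_prop)

theorem exists_bound_had_gradient_hmap (hf : ContDiff ℝ 1 f) (r : ℝ) :
    ∃ B, ∀ z ∈ Set.Icc (0 : ℝ) 1, ∀ y ∈ closedBall (0 : EuclideanSpace ℝ (Fin d)) r,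
      ‖had (gradient f (hmap z y)) (expv z y)‖ ≤ B := by
  obtain ⟨B, hB⟩ := (isCompact_Icc.prod (isCompact_closedBall 0 r)).exists_bound_of_continuousOn
    (continuous_had_gradient_hmap hf).continuousOn
  exact ⟨B, fun z hz y hy => hB (z, y) ⟨hz, hy⟩⟩

theorem abs_comp_hmap_sub_le (hf : Differentiable ℝ f) {r B z : ℝ}
    (hz : 0 ≤ z) (hB : ∀ y ∈ closedBall (0 : EuclideanSpace ℝ (Fin d)) r,
      ‖had (gradient f (hmap z y)) (expv z y)‖ ≤ B)
    {x : EuclideanSpace ℝ (Fin d)} (hx : x ∈ closedBall 0 r) :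
    |f (hmap z x) - f 0| ≤ z * B * ‖x‖ := by
  have hmap_zero : hmap z (0 : EuclideanSpace ℝ (Fin d)) = 0 := by
    ext i
    simp [hmap]
  have h := Convex.norm_image_sub_le_of_norm_hasFDerivWithin_le (C := z * B)
    (fun y _ => (hasGradientAt_comp_hmap hf z y).hasFDerivAt.hasFDerivWithinAt) (fun y hy => ?_)
    (convex_closedBall 0 r) (mem_closedBall_self (dist_nonneg.trans hx)) hx
  · simpa [hmap_zero] using h
  · simpa [norm_smul, abs_of_nonneg hz, mul_assoc] using mul_le_mul_of_nonneg_left (hB y hy) hz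

theorem continuousOn_surrogate_integrand (hf : Continuous f) (y : EuclideanSpace ℝ (Fin d)) :
    ContinuousOn (fun z => Real.exp (z - 1) / ((1 - Real.exp (-1)) * z) * (f (hmap z y) - f 0))
      (Set.Ioi 0) := by
  refine ContinuousOn.mul ?_ ?_
  · exact ContinuousOn.div (by fun_prop) (by fun_prop) fun z hz =>
      mul_ne_zero one_sub_exp_neg_one_pos.ne' (ne_of_gt hz)
  · exact ((hf.comp (continuous_hmap.comp (continuous_id.prodMk continuous_const))).sub
      continuous_const).continuousOn

theorem integrableOn_surrogate_integrand (hf : ContDiff ℝ 1 f) (x : EuclideanSpace ℝ (Fin d)) :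
    IntegrableOn (fun z => Real.exp (z - 1) / ((1 - Real.exp (-1)) * z) * (f (hmap z x) - f 0))
      (Set.Ioc 0 1) := by
  obtain ⟨B, hB⟩ := exists_bound_had_gradient_hmap hf ‖x‖
  refine Integrable.mono' (g := fun z => Real.exp (z - 1) / (1 - Real.exp (-1)) * (B * ‖x‖))
    (by fun_prop : Continuous _).integrableOn_Ioc
    (((continuousOn_surrogate_integrand hf.continuous x).mono
      Set.Ioc_subset_Ioi_self).aestronglyMeasurable measurableSet_Ioc) ?_
  filter_upwards [ae_restrict_mem measurableSet_Ioc] with z hz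
  have hdiff := abs_comp_hmap_sub_le (hf.differentiable one_ne_zero) hz.1.le
    (hB z (Set.Ioc_subset_Icc_self hz)) (x := x) (by simp)
  have hc : 0 ≤ Real.exp (z - 1) / ((1 - Real.exp (-1)) * z) :=
    div_nonneg (Real.exp_pos _).le (mul_pos one_sub_exp_neg_one_pos hz.1).le
  calc ‖Real.exp (z - 1) / ((1 - Real.exp (-1)) * z) * (f (hmap z x) - f 0)‖
      ≤ Real.exp (z - 1) / ((1 - Real.exp (-1)) * z) * (z * B * ‖x‖) := by
        rw [Real.norm_eq_abs, abs_mul, abs_of_nonneg hc]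
        exact mul_le_mul_of_nonneg_left hdiff hc
    _ = Real.exp (z - 1) / (1 - Real.exp (-1)) * (B * ‖x‖) := by
        field_simp [hz.1.ne']

theorem hasGradientAt_surrogate (hf : ContDiff ℝ 1 f) (x : EuclideanSpace ℝ (Fin d)) :
    HasGradientAt (surrogate f) (∫ z in (0:ℝ)..1, (Real.exp (z - 1) / (1 - Real.exp (-1))) •
      had (gradient f (hmap z x)) (expv z x)) x := by
  have hdiff : Differentiable ℝ f := hf.differentiable one_ne_zero
  set p : ℝ → ℝ := fun z => Real.exp (z - 1) / (1 - Real.exp (-1))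
  have hp_cont : Continuous p := by fun_prop
  have hp_nonneg : ∀ z, 0 ≤ p z := fun z =>
    div_nonneg (Real.exp_pos _).le one_sub_exp_neg_one_pos.le
  obtain ⟨B, hB⟩ := exists_bound_had_gradient_hmap hf (‖x‖ + 1)
  have hball : ball x 1 ⊆ closedBall 0 (‖x‖ + 1) := fun y hy => by
    rw [mem_closedBall_zero_iff]
    linarith [norm_le_norm_add_norm_sub' y x, (mem_ball_iff_norm.1 hy).le]
  unfold surrogate
  simp only [intervalIntegral.integral_of_le zero_le_one]
  refine hasGradientAt_integral_of_dominated_of_gradient_le (ball_mem_nhds x one_pos)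
    (F := fun y z => Real.exp (z - 1) / ((1 - Real.exp (-1)) * z) * (f (hmap z y) - f 0))
    (G := fun y z => p z • had (gradient f (hmap z y)) (expv z y))
    (bound := fun z => p z * B) (Eventually.of_forall fun y => ?_) ?_ ?_ ?_
    ((hp_cont.mul continuous_const).integrableOn_Ioc (μ := volume)) ?_
  · exact ((continuousOn_surrogate_integrand hf.continuous y).mono
      Set.Ioc_subset_Ioi_self).aestronglyMeasurable measurableSet_Ioc
  · exact integrableOn_surrogate_integrand hf x
  · exact (hp_cont.smul ((continuous_had_gradient_hmap hf).comp
      (continuous_id.prodMk continuous_const))).aestronglyMeasurable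
  · filter_upwards [ae_restrict_mem measurableSet_Ioc] with z hz y hy
    rw [norm_smul, Real.norm_of_nonneg (hp_nonneg z)]
    exact mul_le_mul_of_nonneg_left (hB z (Set.Ioc_subset_Icc_self hz) y (hball hy)) (hp_nonneg z)
  · filter_upwards [ae_restrict_mem measurableSet_Ioc] with z hz y _
    exact hasGradientAt_surrogate_integrand hdiff hz.1.ne' y

end Surrogate

theorem stmt12_general {d : ℕ} (f : EuclideanSpace ℝ (Fin d) → ℝ)
    (hf : ContDiff ℝ 1 f) :
    ∀ x : EuclideanSpace ℝ (Fin d), inBox x →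
      (∫ z in (0:ℝ)..1, (Real.exp (z - 1) / (1 - Real.exp (-1))) •
          had (gradient f (hmap z x)) (expv z x)) =
        gradient (surrogate f) x :=
  fun x _ => (hasGradientAt_surrogate hf x).gradient.symm

/-- Unbiasedness of the BQND estimator.
For a non-negative, continuously differentiable, `M₁`-Lipschitz, continuous
DR-submodular `f` with surrogate potential `F`, with `Z` distributed on `[0,1]` with
density `p(z) = e^{z-1}/(1-e⁻¹)`, for every `x ∈ [0,1]^d`:
`E_Z[∇f(1 - e^{-Z x}) ⊙ e^{-Z x}] = ∫₀¹ p(z) (∇f(h_z(x)) ⊙ e^{-z x}) dz = ∇F(x)`. -/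
theorem stmt12 {d : ℕ} (f : EuclideanSpace ℝ (Fin d) → ℝ) (M₁ : ℝ)
    (hf : ContDiff ℝ 1 f) (hpos : ∀ x, inBox x → 0 ≤ f x)
    (hLip : ∀ x, inBox x → ‖gradient f x‖ ≤ M₁) (hDR : DRSubmodular f) :
    ∀ x : EuclideanSpace ℝ (Fin d), inBox x →
      (∫ z in (0:ℝ)..1, (Real.exp (z - 1) / (1 - Real.exp (-1))) •
          had (gradient f (hmap z x)) (expv z x)) =
        gradient (surrogate f) x :=
  stmt12_general f hf
end
end
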